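/- arXiv:2105.11491 — 6 statements merged into one kernel-verified Lean document; each statement's English description precedes it below -/
import Mathlib

section
/- Let n ≥ 4, t = ⌊n/2⌋, and let K_n be the complete graph on vertices v_1, …, v_n. For each i ∈ {1,…,t}, let T_i be the subgraph with edge set {(v_i, v_{i+t})} ∪ {(v_i, v_j) : i+1 ≤ j ≤ t+i−1} ∪ {(v_{i+t}, v_j) : 1 ≤ j ≤ i−1 or t+i+1 ≤ j ≤ n}. Then T_1, …, T_t are t completely independent spanning trees of K_n, and for each i the inner vertices of T_i are exactly v_i and v_{i+t}. -/
open SimpleGraph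

def IsSpanningTreeOf {V : Type*} (G T : SimpleGraph V) : Prop :=
  T ≤ G ∧ T.IsTree

def InternallyDisjointPaths {V : Type*} (T₁ T₂ : SimpleGraph V) : Prop :=
  ∀ (x y : V) (p : T₁.Walk x y) (q : T₂.Walk x y),
    p.IsPath → q.IsPath → ∀ v, v ∈ p.support → v ∈ q.support → v = x ∨ v = y

def IsCISTFamily {V : Type*} (G : SimpleGraph V) {t : ℕ}
    (T : Fin t → SimpleGraph V) : Prop :=
  (∀ i, IsSpanningTreeOf G (T i)) ∧
  (∀ i j, i ≠ j → Disjoint ((T i).edgeSet) ((T j).edgeSet)) ∧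
  (∀ i j, i ≠ j → InternallyDisjointPaths (T i) (T j))

def IsInnerVertex {V : Type*} (T : SimpleGraph V) (v : V) : Prop :=
  ¬ ∃! w, T.Adj v w

/-- The tree `T_i` in the complete graph `K_n` (vertices are `Fin n`, thought of as
`v_1, …, v_n` via `a ↦ a.val + 1`), with edge set
`{(v_i, v_{i+t})} ∪ {(v_i, v_j) : i+1 ≤ j ≤ t+i−1} ∪
 {(v_{i+t}, v_j) : 1 ≤ j ≤ i−1 or t+i+1 ≤ j ≤ n}`. -/
def kTree (n t i : ℕ) : SimpleGraph (Fin n) :=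
  SimpleGraph.fromEdgeSet
    { e : Sym2 (Fin n) | ∃ a b : Fin n, e = s(a, b) ∧
        ((a.val + 1 = i ∧ b.val + 1 = i + t) ∨
         (a.val + 1 = i ∧ i + 1 ≤ b.val + 1 ∧ b.val + 1 ≤ t + i - 1) ∨
         (a.val + 1 = i + t ∧ (b.val + 1 ≤ i - 1 ∨ t + i + 1 ≤ b.val + 1))) }

namespace CISTAux

open SimpleGraph Walk

/-- An internal vertex of a path has two distinct neighbours. -/
lemma internal_two_nbrs {V : Type*} {G : SimpleGraph V} :
    ∀ {x y : V} (p : G.Walk x y), p.IsPath → ∀ v ∈ p.support, v ≠ x → v ≠ y →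
      ∃ a b, a ≠ b ∧ G.Adj v a ∧ G.Adj v b := by
  intro x y p
  induction p with
  | nil =>
    intro _ v hv hvx _
    simp only [Walk.support_nil, List.mem_singleton] at hv
    exact absurd hv hvx
  | @cons x w y h q ih =>
    intro hp v hv hvx hvy
    rw [Walk.support_cons, List.mem_cons] at hv
    rcases hv with rfl | hv
    · exact absurd rfl hvx
    by_cases hvw : v = w
    · subst hvw
      cases q with
      | nil => exact absurd rfl hvy
      | @cons _ u _ h' q' =>
        refine ⟨x, u, ?_, h.symm, h'⟩
        have hx : x ∉ (Walk.cons h' q').support := (Walk.cons_isPath_iff h _).mp hp |>.2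
        intro hxu
        apply hx
        rw [Walk.support_cons, hxu]
        exact List.mem_cons_of_mem _ q'.start_mem_support
    · exact ih ((Walk.cons_isPath_iff h q).mp hp).1 v hv hvw hvy

/-- A walk of length at least two ends with an edge whose other endpoint lies in
the tail of the support. -/
lemma exists_penult {V : Type*} {G : SimpleGraph V} :
    ∀ {v z : V} (q : G.Walk v z), 2 ≤ q.length → ∃ b, G.Adj b z ∧ b ∈ q.support.tail := by
  intro v z q
  induction q with
  | nil => intro h; simp at h
  | @cons v w z h q' ih =>
    intro hl
    by_cases h2 : 2 ≤ q'.length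
    · obtain ⟨b, hb1, hb2⟩ := ih h2
      refine ⟨b, hb1, ?_⟩
      rw [Walk.support_cons, List.tail_cons]
      exact List.mem_of_mem_tail hb2
    · cases q' with
      | nil => rw [Walk.length_cons, Walk.length_nil] at hl; omega
      | @cons w u z h' q'' =>
        have h0 : q''.length = 0 := by
          rw [Walk.length_cons] at h2; omega
        have hu : u = z := Walk.eq_of_length_eq_zero h0
        subst hu
        refine ⟨w, h', ?_⟩
        rw [Walk.support_cons, List.tail_cons]
        exact (Walk.cons h' q'').start_mem_support

/-- Every vertex on a cycle has two distinct neighbours. -/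
lemma cycle_two_nbrs {V : Type*} [DecidableEq V] {G : SimpleGraph V} {x z : V} (w : G.Walk x x)
    (hw : w.IsCycle) (hz : z ∈ w.support) :
    ∃ a b, a ≠ b ∧ G.Adj z a ∧ G.Adj z b := by
  have hw' : (w.rotate z hz).IsCycle := hw.rotate hz
  have h3 := hw'.three_le_length
  cases hq : w.rotate z hz with
  | nil => rw [hq] at h3; simp at h3
  | @cons _ v _ h q =>
    rw [hq] at hw' h3
    have hlen : 2 ≤ q.length := by rw [Walk.length_cons] at h3; omega
    obtain ⟨b, hb1, hb2⟩ := exists_penult q hlen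
    have hnd : q.support.Nodup := by
      have hn := hw'.support_nodup
      rwa [Walk.support_cons, List.tail_cons] at hn
    refine ⟨v, b, ?_, h, hb1.symm⟩
    have hcons : q.support = v :: q.support.tail := q.support_eq_cons
    rw [hcons] at hnd
    intro hvb
    exact (List.nodup_cons.mp hnd).1 (hvb ▸ hb2)

/-- Clean numeric characterisation of adjacency in `kTree n t (k+1)`. -/
lemma kTree_adj_val {n t k : ℕ} (hk : k < t) (a b : Fin n) :
    (kTree n t (k+1)).Adj a b ↔
      (((a : ℕ) = k ∧ (b : ℕ) = k + t) ∨ ((a : ℕ) = k ∧ k < (b : ℕ) ∧ (b : ℕ) < k + t) ∨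
        ((a : ℕ) = k + t ∧ ((b : ℕ) < k ∨ k + t < (b : ℕ)))) ∨
      (((b : ℕ) = k ∧ (a : ℕ) = k + t) ∨ ((b : ℕ) = k ∧ k < (a : ℕ) ∧ (a : ℕ) < k + t) ∨
        ((b : ℕ) = k + t ∧ ((a : ℕ) < k ∨ k + t < (a : ℕ)))) := by
  unfold kTree
  rw [SimpleGraph.fromEdgeSet_adj]
  simp only [Set.mem_setOf_eq]
  constructor
  · rintro ⟨⟨x, y, hxy, hc⟩, hne⟩
    have hne' : (a : ℕ) ≠ (b : ℕ) := fun h => hne (Fin.ext h)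
    rcases Sym2.eq_iff.mp hxy with ⟨rfl, rfl⟩ | ⟨rfl, rfl⟩ <;> omega
  · intro h
    have hval : (a : ℕ) ≠ (b : ℕ) := by omega
    have hab : a ≠ b := fun he => hval (by rw [he])
    rcases h with h | h
    · exact ⟨⟨a, b, rfl, by omega⟩, hab⟩
    · exact ⟨⟨b, a, Sym2.eq_swap, by omega⟩, hab⟩

section Tree

variable {n t k : ℕ}

lemma adj_noncenter (h1 : 2*t ≤ n) (h2 : n ≤ 2*t+1) (hk : k < t)
    {v w : Fin n} (hv1 : (v : ℕ) ≠ k) (hv2 : (v : ℕ) ≠ k + t) :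
    (kTree n t (k+1)).Adj v w ↔
      ((k < (v : ℕ) ∧ (v : ℕ) < k + t) ∧ (w : ℕ) = k) ∨
      (((v : ℕ) < k ∨ k + t < (v : ℕ)) ∧ (w : ℕ) = k + t) := by
  rw [kTree_adj_val hk]
  have := v.isLt
  have := w.isLt
  omega

lemma center_of_two_adj (h1 : 2*t ≤ n) (h2 : n ≤ 2*t+1) (hk : k < t)
    {v a b : Fin n} (hab : a ≠ b) (ha : (kTree n t (k+1)).Adj v a)
    (hb : (kTree n t (k+1)).Adj v b) : (v : ℕ) = k ∨ (v : ℕ) = k + t := by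
  by_contra hcon
  push_neg at hcon
  rw [adj_noncenter h1 h2 hk hcon.1 hcon.2] at ha hb
  exact hab (Fin.ext (by omega))

lemma kTree_acyclic (h1 : 2*t ≤ n) (h2 : n ≤ 2*t+1) (hk : k < t) :
    (kTree n t (k+1)).IsAcyclic := by
  intro x w hw
  have hcen : ∀ z ∈ w.support, (z : ℕ) = k ∨ (z : ℕ) = k + t := by
    intro z hz
    obtain ⟨a, b, hab, ha, hb⟩ := cycle_two_nbrs w hw hz
    exact center_of_two_adj h1 h2 hk hab ha hb
  have h3 := hw.three_le_length
  have hnd := hw.support_nodup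
  have hklt : k + t < n := by omega
  have hsub : w.support.tail.toFinset ⊆ {(⟨k, by omega⟩ : Fin n), ⟨k + t, hklt⟩} := by
    intro z hz
    rw [List.mem_toFinset] at hz
    rcases hcen z (List.mem_of_mem_tail hz) with h | h
    · exact Finset.mem_insert.mpr (Or.inl (Fin.ext h))
    · exact Finset.mem_insert.mpr (Or.inr (Finset.mem_singleton.mpr (Fin.ext h)))
  have hcard := Finset.card_le_card hsub
  rw [List.toFinset_card_of_nodup hnd] at hcard
  have hlen : w.support.tail.length = w.length := by
    have := w.length_support
    have ht' : w.support.tail.length = w.support.length - 1 := by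
      simp [List.length_tail]
    omega
  have h2' : ({(⟨k, by omega⟩ : Fin n), ⟨k + t, hklt⟩} : Finset (Fin n)).card ≤ 2 := by
    apply le_trans (Finset.card_insert_le _ _)
    simp
  omega

lemma reach_center (h1 : 2*t ≤ n) (h2 : n ≤ 2*t+1) (hk : k < t) (v : Fin n) :
    (kTree n t (k+1)).Reachable v ⟨k, by omega⟩ := by
  have hklt : k + t < n := by omega
  have hck : ((⟨k, by omega⟩ : Fin n) : ℕ) = k := rfl
  have hcd : ((⟨k + t, hklt⟩ : Fin n) : ℕ) = k + t := rfl
  have hdc : (kTree n t (k+1)).Adj ⟨k + t, hklt⟩ ⟨k, by omega⟩ := by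
    rw [kTree_adj_val hk, hck, hcd]; omega
  have hvlt := v.isLt
  by_cases hv1 : (v : ℕ) = k
  · have : v = ⟨k, by omega⟩ := Fin.ext (by rw [hck, hv1])
    rw [this]
  by_cases hv2 : (v : ℕ) = k + t
  · have : v = ⟨k + t, hklt⟩ := Fin.ext (by rw [hcd, hv2])
    rw [this]
    exact hdc.reachable
  by_cases hm : k < (v : ℕ) ∧ (v : ℕ) < k + t
  · have : (kTree n t (k+1)).Adj v ⟨k, by omega⟩ := by
      rw [kTree_adj_val hk, hck]; omega
    exact this.reachable
  · have : (kTree n t (k+1)).Adj v ⟨k + t, hklt⟩ := by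
      rw [kTree_adj_val hk, hcd]; omega
    exact this.reachable.trans hdc.reachable

lemma kTree_connected (h1 : 2*t ≤ n) (h2 : n ≤ 2*t+1) (hk : k < t) :
    (kTree n t (k+1)).Connected := by
  haveI : Nonempty (Fin n) := ⟨⟨0, by omega⟩⟩
  exact ⟨fun u v => (reach_center h1 h2 hk u).trans (reach_center h1 h2 hk v).symm⟩

lemma center_two_nbrs (h1 : 2*t ≤ n) (h2 : n ≤ 2*t+1) (hk : k < t) (ht : 2 ≤ t)
    {x : Fin n} (hx : (x : ℕ) = k ∨ (x : ℕ) = k + t) :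
    ∃ a b : Fin n, a ≠ b ∧ (kTree n t (k+1)).Adj x a ∧ (kTree n t (k+1)).Adj x b := by
  rcases hx with hx | hx
  · refine ⟨⟨k + t, by omega⟩, ⟨k + 1, by omega⟩, ?_, ?_, ?_⟩
    · intro h
      have : k + t = k + 1 := congrArg Fin.val h
      omega
    · rw [kTree_adj_val hk]
      have : ((⟨k + t, by omega⟩ : Fin n) : ℕ) = k + t := rfl
      omega
    · rw [kTree_adj_val hk]
      have : ((⟨k + 1, by omega⟩ : Fin n) : ℕ) = k + 1 := rfl
      omega
  · by_cases hk0 : k = 0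
    · refine ⟨⟨k, by omega⟩, ⟨t + 1, by omega⟩, ?_, ?_, ?_⟩
      · intro h
        have : k = t + 1 := congrArg Fin.val h
        omega
      · rw [kTree_adj_val hk]
        have : ((⟨k, by omega⟩ : Fin n) : ℕ) = k := rfl
        omega
      · rw [kTree_adj_val hk]
        have : ((⟨t + 1, by omega⟩ : Fin n) : ℕ) = t + 1 := rfl
        omega
    · refine ⟨⟨k, by omega⟩, ⟨0, by omega⟩, ?_, ?_, ?_⟩
      · intro h
        have : k = 0 := congrArg Fin.val h
        omega
      · rw [kTree_adj_val hk]
        have : ((⟨k, by omega⟩ : Fin n) : ℕ) = k := rfl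
        omega
      · rw [kTree_adj_val hk]
        have : ((⟨0, by omega⟩ : Fin n) : ℕ) = 0 := rfl
        omega

lemma existsUnique_adj_iff (h1 : 2*t ≤ n) (h2 : n ≤ 2*t+1) (hk : k < t) (ht : 2 ≤ t)
    (x : Fin n) :
    (∃! w, (kTree n t (k+1)).Adj x w) ↔ ((x : ℕ) ≠ k ∧ (x : ℕ) ≠ k + t) := by
  constructor
  · rintro ⟨w, hw, hu⟩
    by_contra hcon
    have hx : (x : ℕ) = k ∨ (x : ℕ) = k + t := by omega
    obtain ⟨a, b, hab, ha, hb⟩ := center_two_nbrs h1 h2 hk ht hx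
    exact hab ((hu a ha).trans (hu b hb).symm)
  · rintro ⟨hv1, hv2⟩
    have hvlt := x.isLt
    by_cases hm : k < (x : ℕ) ∧ (x : ℕ) < k + t
    · refine ⟨⟨k, by omega⟩, ?_, ?_⟩
      · show (kTree n t (k+1)).Adj x ⟨k, by omega⟩
        rw [adj_noncenter h1 h2 hk hv1 hv2]
        have : ((⟨k, by omega⟩ : Fin n) : ℕ) = k := rfl
        omega
      · intro y hy
        have hy' : (kTree n t (k+1)).Adj x y := hy
        rw [adj_noncenter h1 h2 hk hv1 hv2] at hy'
        exact Fin.ext (by have : ((⟨k, by omega⟩ : Fin n) : ℕ) = k := rfl; omega)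
    · refine ⟨⟨k + t, by omega⟩, ?_, ?_⟩
      · show (kTree n t (k+1)).Adj x ⟨k + t, by omega⟩
        rw [adj_noncenter h1 h2 hk hv1 hv2]
        have : ((⟨k + t, by omega⟩ : Fin n) : ℕ) = k + t := rfl
        omega
      · intro y hy
        have hy' : (kTree n t (k+1)).Adj x y := hy
        rw [adj_noncenter h1 h2 hk hv1 hv2] at hy'
        exact Fin.ext (by have : ((⟨k + t, by omega⟩ : Fin n) : ℕ) = k + t := rfl; omega)

end Tree

end CISTAux

/-- For `n ≥ 4` and `t = ⌊n/2⌋`, the trees `T_1, …, T_t` described above are `t`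
completely independent spanning trees of `K_n`, and for each `i` the inner vertices
of `T_i` are exactly `v_i` and `v_{i+t}`. -/
theorem kTree_isCISTFamily (n : ℕ) (hn : 4 ≤ n) :
    IsCISTFamily (⊤ : SimpleGraph (Fin n))
      (fun i : Fin (n / 2) => kTree n (n / 2) (i.val + 1)) ∧
    ∀ (i : Fin (n / 2)) (x : Fin n),
      IsInnerVertex (kTree n (n / 2) (i.val + 1)) x ↔
        (x.val + 1 = i.val + 1 ∨ x.val + 1 = i.val + 1 + n / 2) := by
  have h1 : 2 * (n / 2) ≤ n := by omega
  have h2 : n ≤ 2 * (n / 2) + 1 := by omega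
  have ht : 2 ≤ n / 2 := by omega
  refine ⟨⟨fun i => ⟨le_top, ?_, ?_⟩, fun i j hij => ?_, fun i j hij => ?_⟩, fun i x => ?_⟩
  · exact CISTAux.kTree_connected h1 h2 i.isLt
  · exact CISTAux.kTree_acyclic h1 h2 i.isLt
  · -- edge disjointness
    rw [Set.disjoint_left]
    intro e hei hej
    induction e using Sym2.ind with
    | _ a b =>
      rw [SimpleGraph.mem_edgeSet] at hei hej
      rw [CISTAux.kTree_adj_val i.isLt] at hei
      rw [CISTAux.kTree_adj_val j.isLt] at hej
      have hij' : (i : ℕ) ≠ (j : ℕ) := fun h => hij (Fin.ext h)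
      have := i.isLt
      have := j.isLt
      omega
  · -- internally disjoint paths
    intro x y p q hp hq v hvp hvq
    by_contra hcon
    push_neg at hcon
    obtain ⟨a, b, hab, ha, hb⟩ := CISTAux.internal_two_nbrs p hp v hvp hcon.1 hcon.2
    obtain ⟨a', b', hab', ha', hb'⟩ := CISTAux.internal_two_nbrs q hq v hvq hcon.1 hcon.2
    have hci := CISTAux.center_of_two_adj h1 h2 i.isLt hab ha hb
    have hcj := CISTAux.center_of_two_adj h1 h2 j.isLt hab' ha' hb'
    have hij' : (i : ℕ) ≠ (j : ℕ) := fun h => hij (Fin.ext h)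
    have := i.isLt
    have := j.isLt
    omega
  · -- inner vertices
    unfold IsInnerVertex
    rw [CISTAux.existsUnique_adj_iff h1 h2 i.isLt ht]
    have := x.isLt
    have := i.isLt
    omega
end

section
/- For every n ≥ 4, the complete graph K_n contains ⌊n/2⌋ completely independent spanning trees. -/
open SimpleGraph

def hubN (i v : ℕ) : ℕ := if (v % 2 = 0 ↔ i < v / 2) then 2*i else 2*i+1

def adjOne (i x y : ℕ) : Prop :=
  (x = 2*i ∧ y = 2*i+1) ∨ (y / 2 ≠ i ∧ x = hubN i y)

lemma hubN_block (i v : ℕ) : (hubN i v) / 2 = i := by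
  unfold hubN; split_ifs <;> omega

lemma hubN_le (i v : ℕ) : hubN i v ≤ 2*i+1 := by
  unfold hubN; split_ifs <;> omega

lemma adjOne_inj {i j x y : ℕ}
    (hi : adjOne i x y ∨ adjOne i y x) (hj : adjOne j x y ∨ adjOne j y x) : i = j := by
  unfold adjOne hubN at hi hj
  split_ifs at hi hj <;> omega

def TT (n i : ℕ) : SimpleGraph (Fin n) where
  Adj x y := adjOne i x.val y.val ∨ adjOne i y.val x.val
  symm := by constructor; intro x y h; tauto
  loopless := by
    constructor; intro x h
    unfold adjOne hubN at h
    split_ifs at h <;> omega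

lemma TT_adj_val {n i : ℕ} {v x : Fin n} (hv : v.val / 2 ≠ i)
    (h : (TT n i).Adj v x) : x.val = hubN i v.val := by
  rcases h with (h | h) <;> rcases h with (⟨h1, h2⟩ | ⟨h1, h2⟩)
  · exact absurd (by omega) hv
  · exact absurd (h2 ▸ hubN_block i x.val) hv
  · exact absurd (by omega) hv
  · exact h2

lemma TT_unique_nbr {n i : ℕ} {v x y : Fin n} (hv : v.val / 2 ≠ i)
    (hx : (TT n i).Adj v x) (hy : (TT n i).Adj v y) : x = y :=
  Fin.ext ((TT_adj_val hv hx).trans (TT_adj_val hv hy).symm)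


lemma exists_third {V : Type*} (a b : V) {l : List V} (hnd : l.Nodup) (hl : 3 ≤ l.length) :
    ∃ w ∈ l, w ≠ a ∧ w ≠ b := by
  rcases l with _ | ⟨x, _ | ⟨y, _ | ⟨z, l⟩⟩⟩ <;> simp only [List.length] at hl <;> try omega
  simp only [List.nodup_cons, List.mem_cons] at hnd
  have hxy : x ≠ y := by tauto
  have hxz : x ≠ z := by tauto
  have hyz : y ≠ z := by tauto
  by_cases hx : x ≠ a ∧ x ≠ b
  · exact ⟨x, by simp, hx.1, hx.2⟩
  by_cases hy : y ≠ a ∧ y ≠ b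
  · exact ⟨y, by simp, hy.1, hy.2⟩
  refine ⟨z, by simp, ?_, ?_⟩
  · rintro rfl
    rcases not_and_or.mp hx with hx' | hx' <;> rcases not_and_or.mp hy with hy' | hy' <;>
      push_neg at hx' hy'
    · exact hxz hx'
    · exact hxz hx'
    · exact hyz hy'
    · exact hxy (hx'.trans hy'.symm)
  · rintro rfl
    rcases not_and_or.mp hx with hx' | hx' <;> rcases not_and_or.mp hy with hy' | hy' <;>
      push_neg at hx' hy'
    · exact hxy (hx'.trans hy'.symm)
    · exact hyz hy'
    · exact hxz hx'
    · exact hxz hx'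

/-- If all vertices except possibly `a` and `b` have at most one neighbour, the
graph is acyclic. -/
lemma acyclic_of_unique_nbr {V : Type*} [DecidableEq V] {G : SimpleGraph V} (a b : V)
    (h : ∀ v : V, v ≠ a → v ≠ b → ∀ x y, G.Adj v x → G.Adj v y → x = y) :
    G.IsAcyclic := by
  intro v c hc
  have h3 : 3 ≤ c.length := hc.three_le_length
  have hlen : 3 ≤ c.support.tail.length := by
    have := c.length_support
    simp only [List.length_tail, this]; omega
  obtain ⟨w, hw, hwa, hwb⟩ := exists_third a b hc.support_nodup hlen
  have hw' : w ∈ c.support := List.mem_of_mem_tail hw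
  have hc' : (c.rotate w hw').IsCycle := hc.rotate hw'
  have hnil : ¬ (c.rotate w hw').Nil := hc'.not_nil
  obtain ⟨u, huw, q, hq⟩ := Walk.not_nil_iff.mp hnil
  rw [hq, Walk.cons_isCycle_iff] at hc'
  obtain ⟨hqp, hedge⟩ := hc'
  have hwu : w ≠ u := huw.ne
  have hnil2 : ¬ q.reverse.Nil := Walk.not_nil_of_ne hwu
  obtain ⟨u2, hwu2, r, hr⟩ := Walk.not_nil_iff.mp hnil2
  have hu2 : u2 = u := h w hwa hwb u2 u hwu2 huw
  have hmem : s(w, u2) ∈ q.reverse.edges := by rw [hr]; simp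
  rw [Walk.edges_reverse, List.mem_reverse, hu2] at hmem
  exact hedge hmem

/-- An interior vertex of a path has two distinct neighbours. -/
lemma path_internal_two_nbrs {V : Type*} [DecidableEq V] {G : SimpleGraph V} {x y v : V}
    (p : G.Walk x y) (hp : p.IsPath) (hv : v ∈ p.support) (hvx : v ≠ x) (hvy : v ≠ y) :
    ∃ u w, u ≠ w ∧ G.Adj v u ∧ G.Adj v w := by
  have hspec := p.take_spec hv
  have hnd : p.support.Nodup := hp.support_nodup
  rw [← hspec, Walk.support_append] at hnd
  have hdisj := (List.nodup_append.mp hnd).2.2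
  have hnil2 : ¬ (p.dropUntil v hv).Nil := Walk.not_nil_of_ne hvy
  obtain ⟨w, hvw, q2, hq2⟩ := Walk.not_nil_iff.mp hnil2
  have hwmem : w ∈ (p.dropUntil v hv).support.tail := by
    rw [hq2]; simpa using q2.start_mem_support
  have hnil1 : ¬ (p.takeUntil v hv).reverse.Nil := Walk.not_nil_of_ne hvx
  obtain ⟨u, hvu, q1, hq1⟩ := Walk.not_nil_iff.mp hnil1
  have humem : u ∈ (p.takeUntil v hv).support := by
    rw [← List.mem_reverse, ← Walk.support_reverse, hq1]
    simpa using q1.start_mem_support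
  exact ⟨u, w, fun he => hdisj u humem w hwmem he, hvu, hvw⟩


lemma TT_connected {n i : ℕ} (hi : i < n / 2) : (TT n i).Connected := by
  have h2 : 2*i+1 < n := by omega
  set aF : Fin n := ⟨2*i, by omega⟩ with haF
  set bF : Fin n := ⟨2*i+1, h2⟩ with hbF
  have hab : (TT n i).Adj aF bF := Or.inl (Or.inl ⟨rfl, rfl⟩)
  have reach : ∀ v : Fin n, (TT n i).Reachable aF v := by
    intro v
    by_cases hv : v.val / 2 = i
    · by_cases hv2 : v.val = 2*i
      · have hva : v = aF := Fin.ext hv2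
        rw [hva]
      · have : v = bF := Fin.ext (by simp only [hbF]; omega)
        exact this ▸ hab.reachable
    · have hhub : hubN i v.val < n := lt_of_le_of_lt (hubN_le i v.val) h2
      set hF : Fin n := ⟨hubN i v.val, hhub⟩ with hhF
      have hadj : (TT n i).Adj hF v := Or.inl (Or.inr ⟨hv, rfl⟩)
      have hre : (TT n i).Reachable aF hF := by
        by_cases he : hubN i v.val = 2*i
        · have hha : hF = aF := Fin.ext he
          rw [hha]
        · have : hF = bF := Fin.ext (by
            simp only [hhF, hbF]
            have := hubN_le i v.val
            have := hubN_block i v.val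
            omega)
          exact this ▸ hab.reachable
      exact hre.trans hadj.reachable
  haveI : Nonempty (Fin n) := ⟨aF⟩
  exact Connected.mk fun u v => (reach u).symm.trans (reach v)



/-- For every `n ≥ 4`, the complete graph `K_n` contains `⌊n/2⌋` completely
independent spanning trees. -/
theorem completeGraph_exists_cists (n : ℕ) (hn : 4 ≤ n) :
    ∃ T : Fin (n / 2) → SimpleGraph (Fin n),
      IsCISTFamily (⊤ : SimpleGraph (Fin n)) T := by
  refine ⟨fun i => TT n i.val, ?_, ?_, ?_⟩
  · intro i
    refine ⟨le_top, TT_connected i.isLt, ?_⟩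
    have h2 : 2*i.val+1 < n := by have := i.isLt; omega
    exact acyclic_of_unique_nbr (⟨2*i.val, by omega⟩ : Fin n) ⟨2*i.val+1, h2⟩
      (fun v hva hvb x y hx hy => TT_unique_nbr (by
         have ha : v.val ≠ 2*i.val := fun h => hva (Fin.ext h)
         have hb : v.val ≠ 2*i.val+1 := fun h => hvb (Fin.ext h)
         omega) hx hy)
  · intro i j hij
    rw [Set.disjoint_left]
    intro e he1 he2
    induction e with
    | _ x y =>
      rw [mem_edgeSet] at he1 he2
      exact hij (Fin.ext (adjOne_inj he1 he2))
  · intro i j hij x y p q hp hq v hvp hvq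
    by_contra hcon
    push_neg at hcon
    obtain ⟨hvx, hvy⟩ := hcon
    have hi : v.val / 2 = i.val := by
      by_contra hvi
      obtain ⟨u, w, huw, h1, h2⟩ := path_internal_two_nbrs p hp hvp hvx hvy
      exact huw (TT_unique_nbr hvi h1 h2)
    have hj : v.val / 2 = j.val := by
      by_contra hvj
      obtain ⟨u, w, huw, h1, h2⟩ := path_internal_two_nbrs q hq hvq hvx hvy
      exact huw (TT_unique_nbr hvj h1 h2)
    exact hij (Fin.ext (hi.symm.trans hj))
end

section
/- For every n ≥ 4 and k ≥ 1, the graph L-RCube(n,0,k) (which coincides with the logic graph L-BCube(n,k) of the BCube data center network) contains ⌊n/2⌋ completely independent spanning trees. -/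
open SimpleGraph

/-- A vertex of `L-RCube(n,m,k)`: a string `v_k v_{k-1} ⋯ v_0` with
`v_0 ∈ {0,…,n+m−1}` and `v_i ∈ {0,…,n−1}` for `1 ≤ i ≤ k`, encoded as a function
`ℕ → ℕ` which vanishes above position `k`. -/
abbrev RVertex (n m k : ℕ) :=
  { f : ℕ → ℕ // f 0 < n + m ∧ (∀ i, 1 ≤ i → i ≤ k → f i < n) ∧ ∀ i, k < i → f i = 0 }

/-- Condition (1): `u_j = v_j` for all `j ≥ 1`, and `u_0 ≠ v_0`. -/
def RCond1 (n m k : ℕ) (u v : RVertex n m k) : Prop :=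
  u.1 0 ≠ v.1 0 ∧ ∀ j, 1 ≤ j → u.1 j = v.1 j

/-- Condition (2): `u_0 = v_0 < n` and there is `i ∈ {1,…,k}` with `u_i ≠ v_i`
and `u_j = v_j` for all `j ≠ i`. -/
def RCond2 (n m k : ℕ) (u v : RVertex n m k) : Prop :=
  u.1 0 = v.1 0 ∧ u.1 0 < n ∧
    ∃ i, 1 ≤ i ∧ i ≤ k ∧ u.1 i ≠ v.1 i ∧ ∀ j, j ≠ i → u.1 j = v.1 j

/-- Condition (3): `u_0 ≥ n` and there is `i ∈ {1,…,k}` with `u_j = v_j` for all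
`j ∈ {i+1,…,k}` and `u_i u_{i−1} ⋯ u_1 = v_{i−1} v_{i−2} ⋯ v_0`. -/
def RCond3 (n m k : ℕ) (u v : RVertex n m k) : Prop :=
  n ≤ u.1 0 ∧ ∃ i, 1 ≤ i ∧ i ≤ k ∧ (∀ j, i + 1 ≤ j → u.1 j = v.1 j) ∧
    ∀ j, 1 ≤ j → j ≤ i → u.1 j = v.1 (j - 1)

/-- The logic graph `L-RCube(n,m,k)`: two distinct vertices are adjacent iff,
possibly after swapping their roles, one of the three conditions holds. -/
def LRCube (n m k : ℕ) : SimpleGraph (RVertex n m k) :=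
  SimpleGraph.fromRel
    (fun u v => RCond1 n m k u v ∨ RCond2 n m k u v ∨ RCond3 n m k u v)

namespace CISTAux

open SimpleGraph Walk


variable {V : Type*}

/-- Every internal vertex of a path has two distinct neighbors. -/
lemma exists_two_neighbors {G : SimpleGraph V} {x y : V} (p : G.Walk x y) :
    p.IsPath → ∀ v ∈ p.support, v ≠ x → v ≠ y →
      ∃ a b, a ≠ b ∧ G.Adj v a ∧ G.Adj v b := by
  induction p with
  | nil =>
    intro _ v hv hx _
    simp only [Walk.support_nil, List.mem_singleton] at hv
    exact absurd hv hx
  | @cons x x' y h q ih =>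
    intro hp v hv hx hy
    rw [Walk.support_cons, List.mem_cons] at hv
    rcases hv with rfl | hv
    · exact absurd rfl hx
    rw [Walk.cons_isPath_iff] at hp
    by_cases hvx' : v = x'
    · subst hvx'
      have hq : ¬ q.Nil := Walk.not_nil_of_ne hy
      rw [Walk.not_nil_iff] at hq
      obtain ⟨u, hadj, q', rfl⟩ := hq
      refine ⟨x, u, ?_, h.symm, hadj⟩
      intro hxy
      apply hp.2
      rw [hxy, Walk.support_cons]
      exact List.mem_cons_of_mem _ q'.start_mem_support
    · exact ih hp.1 v hv hvx' hy

section Parent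

variable (r : V) (p : V → V)

/-- The graph determined by a parent function with root `r`. -/
def pGraph : SimpleGraph V := SimpleGraph.fromRel (fun u v => u ≠ r ∧ v = p u)

variable {r p} {μ : V → ℕ}

lemma pGraph_adj {u v : V} :
    (pGraph r p).Adj u v ↔ u ≠ v ∧ ((u ≠ r ∧ v = p u) ∨ (v ≠ r ∧ u = p v)) := by
  simp [pGraph, fromRel_adj]

variable (hd : ∀ x, x ≠ r → μ (p x) < μ x)
include hd

lemma pGraph_adj_parent {x : V} (hx : x ≠ r) : (pGraph r p).Adj x (p x) := by
  have h := hd x hx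
  refine pGraph_adj.mpr ⟨?_, Or.inl ⟨hx, rfl⟩⟩
  intro he
  rw [← he] at h
  omega

lemma pGraph_connected : (pGraph r p).Connected := by
  have key : ∀ N x, μ x ≤ N → (pGraph r p).Reachable x r := by
    intro N
    induction N with
    | zero =>
      intro x hx
      by_cases h : x = r
      · subst h; exact Reachable.refl _
      · exfalso; have := hd x h; omega
    | succ N ih =>
      intro x hx
      by_cases h : x = r
      · subst h; exact Reachable.refl _
      · exact ((pGraph_adj_parent hd h).reachable).trans
          (ih (p x) (by have := hd x h; omega))
  haveI : Nonempty V := ⟨r⟩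
  exact ⟨fun a b => (key (μ a) a le_rfl).trans (key (μ b) b le_rfl).symm⟩

lemma pGraph_acyclic : (pGraph r p).IsAcyclic := by
  classical
  intro v c hc
  have hnil : c.support ≠ [] := c.support_ne_nil
  obtain ⟨u, hu⟩ : ∃ u, u ∈ c.support.argmax μ := by
    cases h : c.support.argmax μ with
    | none => exact absurd (List.argmax_eq_none.mp h) hnil
    | some u => exact ⟨u, rfl⟩
  have humem : u ∈ c.support := List.argmax_mem hu
  have hmax : ∀ a ∈ c.support, μ a ≤ μ u := fun a ha => List.le_of_mem_argmax ha hu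
  have hc' : (c.rotate u humem).IsCycle := hc.rotate humem
  have hmax' : ∀ a ∈ (c.rotate u humem).support, μ a ≤ μ u := by
    intro a ha
    apply hmax
    rw [(c.rotate u humem).support_eq_cons, List.mem_cons] at ha
    rcases ha with rfl | ha
    · exact humem
    · exact List.mem_of_mem_tail (((support_rotate c u humem).mem_iff).mp ha)
  set c' := c.rotate u humem with hc'def
  clear_value c'
  have hnil' : ¬ c'.Nil := hc'.not_nil
  rw [Walk.not_nil_iff] at hnil'
  obtain ⟨w, hadj, q, hq⟩ := hnil'
  rw [hq] at hc'
  rw [Walk.cons_isCycle_iff] at hc'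
  obtain ⟨hqp, hqe⟩ := hc'
  have hrnil : ¬ q.reverse.Nil := Walk.not_nil_of_ne (hadj.ne)
  rw [Walk.not_nil_iff] at hrnil
  obtain ⟨w', hadj', q', hq'⟩ := hrnil
  have hedge : s(u, w') ∈ q.edges := by
    have h1 : s(u, w') ∈ q.reverse.edges := by rw [hq']; simp
    rwa [Walk.edges_reverse, List.mem_reverse] at h1
  have hww' : w ≠ w' := by rintro rfl; exact hqe hedge
  have hw'mem : w' ∈ q.support := q.snd_mem_support_of_mem_edges hedge
  have key : ∀ a, (pGraph r p).Adj u a → μ a ≤ μ u → a = p u := by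
    intro a ha hle
    rcases (pGraph_adj.mp ha).2 with ⟨_, h⟩ | ⟨har, h⟩
    · exact h
    · exfalso; have := hd a har; rw [← h] at this; omega
  have h1 : w = p u := by
    refine key w hadj (hmax' w ?_)
    rw [hq, Walk.support_cons]
    exact List.mem_cons_of_mem _ q.start_mem_support
  have h2 : w' = p u := by
    refine key w' hadj' (hmax' w' ?_)
    rw [hq, Walk.support_cons]
    exact List.mem_cons_of_mem _ hw'mem
  exact hww' (h1.trans h2.symm)

omit hd

lemma pGraph_le {G : SimpleGraph V} (hG : ∀ x, x ≠ r → G.Adj x (p x)) : pGraph r p ≤ G := by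
  intro u v huv
  rcases (pGraph_adj.mp huv).2 with ⟨hur, rfl⟩ | ⟨hvr, rfl⟩
  · exact hG u hur
  · exact (hG v hvr).symm

end Parent




/-- leaf attachment target -/
def fmap (i c : ℕ) : ℕ := if c < 2*i then 2*i + c % 2 else 2*i + 1 - c % 2

lemma fmap_mem (i c : ℕ) : fmap i c = 2*i ∨ fmap i c = 2*i+1 := by
  unfold fmap; split_ifs <;> omega

lemma fmap_le (i c : ℕ) : fmap i c ≤ 2*i+1 := by
  unfold fmap; split_ifs <;> omega

/-- the key coordinate-0 arithmetic fact for edge-disjointness -/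
lemma fmap_key {i j a b : ℕ} (hij : i ≠ j)
    (h1 : ((a = 2*i ∨ a = 2*i+1) ∧ (b = 2*i ∨ b = 2*i+1)) ∨ b = fmap i a ∨ a = fmap i b)
    (h2 : ((a = 2*j ∨ a = 2*j+1) ∧ (b = 2*j ∨ b = 2*j+1)) ∨ b = fmap j a ∨ a = fmap j b) :
    False := by
  unfold fmap at h1 h2
  split_ifs at h1 h2 <;> omega

variable (n k : ℕ)

/-- update one coordinate of a vertex -/
def upd (x : RVertex n 0 k) (j c : ℕ) (hj : j ≤ k) (hc : c < n) : RVertex n 0 k :=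
  ⟨Function.update x.1 j c, by
    obtain ⟨h1, h2, h3⟩ := x.2
    refine ⟨?_, fun a ha1 ha2 => ?_, fun a ha => ?_⟩
    · rw [Function.update_apply]; split_ifs <;> omega
    · rw [Function.update_apply]; split_ifs with h
      · exact hc
      · exact h2 a ha1 ha2
    · rw [Function.update_apply]; split_ifs with h
      · omega
      · exact h3 a ha⟩

@[simp] lemma upd_apply (x : RVertex n 0 k) (j c : ℕ) (hj : j ≤ k) (hc : c < n) (a : ℕ) :
    (upd n k x j c hj hc).1 a = if a = j then c else x.1 a :=
  Function.update_apply _ _ _ _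

/-- the root of the i-th tree -/
def rootV (i : ℕ) (hi : 2*i+1 < n) : RVertex n 0 k :=
  ⟨fun j => if j = 0 then 2*i else 0, by
    refine ⟨by simp; omega, fun a ha1 ha2 => ?_, fun a ha => ?_⟩
    · simp only [show a ≠ 0 by omega, if_false]; omega
    · simp only [show a ≠ 0 by omega, if_false]⟩

lemma exAux {x : RVertex n 0 k} (h : ∃ j ∈ Finset.Icc 1 k, x.1 j ≠ 0) :
    ∃ j, 1 ≤ j ∧ x.1 j ≠ 0 := by
  obtain ⟨j, hj, hj'⟩ := h
  rw [Finset.mem_Icc] at hj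
  exact ⟨j, hj.1, hj'⟩

/-- the parent function of the i-th tree -/
def par (i : ℕ) (hi : 2*i+1 < n) (x : RVertex n 0 k) : RVertex n 0 k :=
  if x.1 0 = 2*i then
    (if h : ∃ j ∈ Finset.Icc 1 k, x.1 j ≠ 0 then
      upd n k x (Nat.find (exAux n k h)) 0
        (by
          obtain ⟨j0, hj1, hj2⟩ := exAux n k h
          have hj0k : j0 ≤ k := by
            by_contra hc
            exact hj2 (x.2.2.2 j0 (by omega))
          exact le_trans (Nat.find_min' _ ⟨hj1, hj2⟩) hj0k)
        (by omega)
    else x)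
  else if x.1 0 = 2*i+1 then upd n k x 0 (2*i) (Nat.zero_le k) (by omega)
  else upd n k x 0 (fmap i (x.1 0)) (Nat.zero_le k) (lt_of_le_of_lt (fmap_le i _) hi)

/-- the measure that decreases along parents -/
def meas (i : ℕ) (x : RVertex n 0 k) : ℕ :=
  (if x.1 0 = 2*i then 0 else if x.1 0 = 2*i+1 then 1 else 2) * (n*k+1)
    + ∑ j ∈ Finset.Icc 1 k, x.1 j

lemma sum_lt (hn : 0 < n) (x : RVertex n 0 k) : ∑ j ∈ Finset.Icc 1 k, x.1 j < n*k+1 := by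
  have h : ∀ j ∈ Finset.Icc 1 k, x.1 j ≤ n - 1 := by
    intro j hj
    rw [Finset.mem_Icc] at hj
    have := x.2.2.1 j hj.1 hj.2
    omega
  have hle : ∑ j ∈ Finset.Icc 1 k, x.1 j ≤ (Finset.Icc 1 k).card • (n-1) :=
    Finset.sum_le_card_nsmul _ _ _ h
  rw [Nat.card_Icc, smul_eq_mul] at hle
  have h2 : (k + 1 - 1) * (n-1) ≤ k * n := by
    have : k + 1 - 1 = k := by omega
    rw [this]
    exact Nat.mul_le_mul_left k (by omega)
  have h3 : k * n = n * k := Nat.mul_comm k n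
  omega

/-- coordinate 0 of the parent is always in the pair {2i, 2i+1} -/
lemma par_pi (i : ℕ) (hi : 2*i+1 < n) (x : RVertex n 0 k) :
    (par n k i hi x).1 0 = 2*i ∨ (par n k i hi x).1 0 = 2*i+1 := by
  unfold par
  split_ifs with h1 h2 h3
  · have hf := Nat.find_spec (exAux n k h2)
    rw [upd_apply]
    rw [if_neg (by omega)]
    exact Or.inl h1
  · exact Or.inl h1
  · rw [upd_apply, if_pos rfl]; exact Or.inl rfl
  · rw [upd_apply, if_pos rfl]; exact fmap_mem i _

lemma par_leaf (i : ℕ) (hi : 2*i+1 < n) (x : RVertex n 0 k)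
    (h1 : x.1 0 ≠ 2*i) (h2 : x.1 0 ≠ 2*i+1) :
    (par n k i hi x).1 0 = fmap i (x.1 0) := by
  unfold par
  rw [if_neg h1, if_neg h2, upd_apply, if_pos rfl]


lemma root_eq (i : ℕ) (hi : 2*i+1 < n) (x : RVertex n 0 k)
    (h1 : x.1 0 = 2*i) (h2 : ¬∃ j ∈ Finset.Icc 1 k, x.1 j ≠ 0) : x = rootV n k i hi := by
  push_neg at h2
  apply Subtype.ext
  funext j
  show x.1 j = if j = 0 then 2*i else 0
  rcases Nat.eq_zero_or_pos j with rfl | hj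
  · simpa using h1
  · rw [if_neg (by omega)]
    by_cases hjk : j ≤ k
    · exact h2 j (Finset.mem_Icc.mpr ⟨hj, hjk⟩)
    · exact x.2.2.2 j (by omega)

lemma meas_par_lt (i : ℕ) (hi : 2*i+1 < n) (x : RVertex n 0 k)
    (hx : x ≠ rootV n k i hi) : meas n k i (par n k i hi x) < meas n k i x := by
  unfold par
  split_ifs with h1 h2 h3
  · -- backbone step: zero out least nonzero coordinate
    have hspec := Nat.find_spec (exAux n k h2)
    set j0 := Nat.find (exAux n k h2) with hj0def
    have hj0k : j0 ≤ k := by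
      by_contra hc
      exact hspec.2 (x.2.2.2 j0 (by omega))
    have hmem : j0 ∈ Finset.Icc 1 k := Finset.mem_Icc.mpr ⟨hspec.1, hj0k⟩
    have e1 : ∑ j ∈ Finset.Icc 1 k, (if j = j0 then 0 else x.1 j)
        = (if j0 = j0 then 0 else x.1 j0)
          + ∑ j ∈ (Finset.Icc 1 k).erase j0, (if j = j0 then 0 else x.1 j) :=
      (Finset.add_sum_erase _ _ hmem).symm
    have e2 : ∑ j ∈ (Finset.Icc 1 k).erase j0, (if j = j0 then (0:ℕ) else x.1 j)
        = ∑ j ∈ (Finset.Icc 1 k).erase j0, x.1 j :=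
      Finset.sum_congr rfl (fun j hj => if_neg (Finset.ne_of_mem_erase hj))
    have e3 : x.1 j0 + ∑ j ∈ (Finset.Icc 1 k).erase j0, x.1 j = ∑ j ∈ Finset.Icc 1 k, x.1 j :=
      Finset.add_sum_erase _ _ hmem
    unfold meas
    simp only [upd_apply]
    rw [if_neg (show (0:ℕ) ≠ j0 by omega), h1]
    simp only [if_pos rfl]
    rw [e1, e2]
    simp only [if_pos rfl]
    have hne0 : 1 ≤ x.1 j0 := by omega
    simp only [if_true]
    omega
  · exact absurd (root_eq n k i hi x h1 h2) hx
  · -- matching step: 2i+1 → 2i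
    unfold meas
    simp only [upd_apply]
    have e : ∑ j ∈ Finset.Icc 1 k, (if j = 0 then 2*i else x.1 j) = ∑ j ∈ Finset.Icc 1 k, x.1 j :=
      Finset.sum_congr rfl (fun j hj => if_neg (by rw [Finset.mem_Icc] at hj; omega))
    rw [e]
    simp only [if_true, if_pos rfl]
    rw [if_neg h1, if_pos h3]
    omega
  · -- leaf step
    unfold meas
    simp only [upd_apply]
    have e : ∑ j ∈ Finset.Icc 1 k, (if j = 0 then fmap i (x.1 0) else x.1 j)
        = ∑ j ∈ Finset.Icc 1 k, x.1 j :=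
      Finset.sum_congr rfl (fun j hj => if_neg (by rw [Finset.mem_Icc] at hj; omega))
    rw [e]
    simp only [if_true]
    rw [if_neg h1, if_neg h3]
    rcases fmap_mem i (x.1 0) with hf | hf
    · rw [if_pos hf]; omega
    · rw [if_neg (by omega), if_pos hf]; omega

lemma par_ne (i : ℕ) (hi : 2*i+1 < n) (x : RVertex n 0 k) (hx : x ≠ rootV n k i hi) :
    x ≠ par n k i hi x := by
  intro he
  have h := meas_par_lt n k i hi x hx
  rw [← he] at h
  omega

lemma par_adj (i : ℕ) (hi : 2*i+1 < n) (x : RVertex n 0 k) (hx : x ≠ rootV n k i hi) :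
    (LRCube n 0 k).Adj x (par n k i hi x) := by
  refine (SimpleGraph.fromRel_adj _ _ _).mpr ⟨par_ne n k i hi x hx, Or.inl ?_⟩
  unfold par
  split_ifs with h1 h2 h3
  · -- RCond2
    right; left
    have hspec := Nat.find_spec (exAux n k h2)
    set j0 := Nat.find (exAux n k h2) with hj0def
    have hj0k : j0 ≤ k := by
      by_contra hc
      exact hspec.2 (x.2.2.2 j0 (by omega))
    refine ⟨by rw [upd_apply, if_neg (show (0:ℕ) ≠ j0 by omega)], by omega,
      j0, hspec.1, hj0k, ?_, fun j hj => ?_⟩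
    · rw [upd_apply, if_pos rfl]
      exact hspec.2
    · rw [upd_apply, if_neg hj]
  · exact absurd (root_eq n k i hi x h1 h2) hx
  · -- matching: RCond1
    left
    refine ⟨?_, fun j hj => ?_⟩
    · rw [upd_apply, if_pos rfl]; omega
    · rw [upd_apply, if_neg (by omega)]
  · -- leaf: RCond1
    left
    refine ⟨?_, fun j hj => ?_⟩
    · rw [upd_apply, if_pos rfl]
      rcases fmap_mem i (x.1 0) with hf | hf <;> omega
    · rw [upd_apply, if_neg (by omega)]

lemma adj_Q (i : ℕ) (hi : 2*i+1 < n) {u v : RVertex n 0 k}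
    (h : (pGraph (rootV n k i hi) (par n k i hi)).Adj u v) :
    ((u.1 0 = 2*i ∨ u.1 0 = 2*i+1) ∧ (v.1 0 = 2*i ∨ v.1 0 = 2*i+1)) ∨
      v.1 0 = fmap i (u.1 0) ∨ u.1 0 = fmap i (v.1 0) := by
  rcases (pGraph_adj.mp h).2 with ⟨_, rfl⟩ | ⟨_, rfl⟩
  · by_cases h1 : u.1 0 = 2*i
    · exact Or.inl ⟨Or.inl h1, par_pi n k i hi u⟩
    · by_cases h3 : u.1 0 = 2*i+1
      · exact Or.inl ⟨Or.inr h3, par_pi n k i hi u⟩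
      · exact Or.inr (Or.inl (par_leaf n k i hi u h1 h3))
  · by_cases h1 : v.1 0 = 2*i
    · exact Or.inl ⟨par_pi n k i hi v, Or.inl h1⟩
    · by_cases h3 : v.1 0 = 2*i+1
      · exact Or.inl ⟨par_pi n k i hi v, Or.inr h3⟩
      · exact Or.inr (Or.inr (par_leaf n k i hi v h1 h3))

lemma leaf_unique (i : ℕ) (hi : 2*i+1 < n) {x a : RVertex n 0 k}
    (hx : ¬(x.1 0 = 2*i ∨ x.1 0 = 2*i+1))
    (h : (pGraph (rootV n k i hi) (par n k i hi)).Adj x a) : a = par n k i hi x := by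
  rcases (pGraph_adj.mp h).2 with ⟨_, rfl⟩ | ⟨_, he⟩
  · rfl
  · exfalso
    have hp := par_pi n k i hi a
    rw [← he] at hp
    exact hx hp


end CISTAux


/-- For every `n ≥ 4` and `k ≥ 1`, the graph `L-RCube(n,0,k)` contains `⌊n/2⌋` completely
independent spanning trees. -/
theorem lRCube_bcube_exists_cists (n k : ℕ) (hn : 4 ≤ n) (hk : 1 ≤ k) :
    ∃ T : Fin (n / 2) → SimpleGraph (RVertex n 0 k),
      IsCISTFamily (LRCube n 0 k) T := by
  classical
  have hi : ∀ i : Fin (n/2), 2*(i:ℕ)+1 < n := fun i => by have := i.2; omega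
  refine ⟨fun i => CISTAux.pGraph (CISTAux.rootV n k i (hi i)) (CISTAux.par n k i (hi i)),
    ?_, ?_, ?_⟩
  · intro i
    refine ⟨CISTAux.pGraph_le (fun x hx => CISTAux.par_adj n k i (hi i) x hx), ?_, ?_⟩
    · exact CISTAux.pGraph_connected (μ := CISTAux.meas n k i)
        (fun x hx => CISTAux.meas_par_lt n k i (hi i) x hx)
    · exact CISTAux.pGraph_acyclic (μ := CISTAux.meas n k i)
        (fun x hx => CISTAux.meas_par_lt n k i (hi i) x hx)
  · intro i j hij
    have hij' : (i:ℕ) ≠ (j:ℕ) := fun h => hij (Fin.val_injective h)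
    rw [Set.disjoint_left]
    intro e hei hej
    revert hei hej
    refine Sym2.ind (fun u v => ?_) e
    intro hei hej
    rw [SimpleGraph.mem_edgeSet] at hei hej
    exact CISTAux.fmap_key hij' (CISTAux.adj_Q n k i (hi i) hei) (CISTAux.adj_Q n k j (hi j) hej)
  · intro i j hij x y p q hp hq v hvp hvq
    by_contra hcon
    push_neg at hcon
    obtain ⟨a, b, hab, ha, hb⟩ := CISTAux.exists_two_neighbors p hp v hvp hcon.1 hcon.2
    obtain ⟨c, d, hcd, hc, hd⟩ := CISTAux.exists_two_neighbors q hq v hvq hcon.1 hcon.2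
    have hpi : v.1 0 = 2*(i:ℕ) ∨ v.1 0 = 2*(i:ℕ)+1 := by
      by_contra hv
      exact hab ((CISTAux.leaf_unique n k i (hi i) hv ha).trans
        (CISTAux.leaf_unique n k i (hi i) hv hb).symm)
    have hpj : v.1 0 = 2*(j:ℕ) ∨ v.1 0 = 2*(j:ℕ)+1 := by
      by_contra hv
      exact hcd ((CISTAux.leaf_unique n k j (hi j) hv hc).trans
        (CISTAux.leaf_unique n k j (hi j) hv hd).symm)
    have hij' : (i:ℕ) ≠ (j:ℕ) := fun h => hij (Fin.val_injective h)
    omega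
end

section
/- Let n ≥ 1, m ≥ 0, and k ≥ 1. For each a ∈ {0,…,n−1}, the subgraph of L-RCube(n,m,k) induced by the set of vertices whose leftmost symbol v_k equals a is isomorphic to L-RCube(n,m,k−1), via the map that deletes the leftmost symbol. Consequently, the vertex set of L-RCube(n,m,k) is partitioned into n pairwise vertex-disjoint induced copies of L-RCube(n,m,k−1). -/
open SimpleGraph

/-- The map deleting the leftmost symbol: it sends a vertex `u = u_k u_{k-1} ⋯ u_0`
of `L-RCube(n,m,k)` to the vertex `u_{k-1} ⋯ u_0` of `L-RCube(n,m,k-1)`. -/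
def truncVertex (n m k : ℕ) (u : RVertex n m k) : RVertex n m (k - 1) :=
  ⟨fun i => if i ≤ k - 1 then u.1 i else 0, by
    obtain ⟨h0, h1, h2⟩ := u.2
    refine ⟨?_, ?_, ?_⟩
    · show (if (0 : ℕ) ≤ k - 1 then u.1 0 else 0) < n + m
      rw [if_pos (Nat.zero_le _)]; exact h0
    · intro i hi1 hik
      show (if i ≤ k - 1 then u.1 i else 0) < n
      rw [if_pos hik]
      exact h1 i hi1 (le_trans hik (Nat.sub_le k 1))
    · intro i hi
      show (if i ≤ k - 1 then u.1 i else 0) = 0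
      rw [if_neg (by omega)]⟩

lemma trunc_apply (n m k : ℕ) (u : RVertex n m k) (i : ℕ) :
    (truncVertex n m k u).1 i = if i ≤ k - 1 then u.1 i else 0 := rfl

lemma trunc_inj (n m k : ℕ) (u v : RVertex n m k) (h : u.1 k = v.1 k)
    (ht : truncVertex n m k u = truncVertex n m k v) : u = v := by
  apply Subtype.ext; funext i
  rcases lt_trichotomy i k with hi | hi | hi
  · have := congrArg (fun w : RVertex n m (k - 1) => w.1 i) ht
    simpa [trunc_apply, (by omega : i ≤ k - 1)] using this
  · rw [hi]; exact h
  · rw [u.2.2.2 i hi, v.2.2.2 i hi]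

lemma cond_forward (n m k : ℕ) (hn : 1 ≤ n) (hk : 1 ≤ k) (a : ℕ) (ha : a < n)
    (u v : RVertex n m k) (hu : u.1 k = a) (hv : v.1 k = a)
    (h : RCond1 n m k u v ∨ RCond2 n m k u v ∨ RCond3 n m k u v) :
    RCond1 n m (k-1) (truncVertex n m k u) (truncVertex n m k v) ∨
    RCond2 n m (k-1) (truncVertex n m k u) (truncVertex n m k v) ∨
    RCond3 n m (k-1) (truncVertex n m k u) (truncVertex n m k v) := by
  rcases h with ⟨h0, h1⟩ | ⟨he, hlt, i, hi1, hik, hne, hall⟩ | ⟨h0, i, hi1, hik, hhigh, hlow⟩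
  · left
    refine ⟨by simpa [trunc_apply] using h0, fun j hj => ?_⟩
    simp only [trunc_apply]
    split
    · exact h1 j hj
    · rfl
  · have hik' : i ≤ k - 1 := by
      by_contra h'
      have hik2 : i = k := by omega
      subst hik2
      exact hne (hu.trans hv.symm)
    right; left
    refine ⟨by simp [trunc_apply, he], by simpa [trunc_apply] using hlt,
      i, hi1, hik', by simpa [trunc_apply, hik'] using hne, fun j hj => ?_⟩
    simp only [trunc_apply]
    split
    · exact hall j hj
    · rfl
  · rcases Nat.lt_or_ge i k with hilt | hige
    · -- i < k : use condition 3 with the same i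
      right; right
      refine ⟨by simpa [trunc_apply] using h0, i, hi1, by omega, fun j hj => ?_, fun j hj1 hji => ?_⟩
      · simp only [trunc_apply]
        split
        · exact hhigh j hj
        · rfl
      · simp only [trunc_apply, if_pos (by omega : j ≤ k - 1), if_pos (by omega : j - 1 ≤ k - 1)]
        exact hlow j hj1 hji
    · have hik' : i = k := le_antisymm hik hige
      subst hik'
      rcases Nat.lt_or_ge 1 i with h2 | h2
      · -- k ≥ 2 : use condition 3 with i = k - 1
        right; right
        refine ⟨by simpa [trunc_apply] using h0, i - 1, by omega, le_rfl, fun j hj => ?_, fun j hj1 hji => ?_⟩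
        · simp only [trunc_apply, if_neg (by omega : ¬ j ≤ i - 1)]
        · simp only [trunc_apply, if_pos (by omega : j ≤ i - 1), if_pos (by omega : j - 1 ≤ i - 1)]
          exact hlow j hj1 (by omega)
      · -- k = 1 : condition 1
        have hk1 : i = 1 := by omega
        left
        constructor
        · simp only [trunc_apply, if_pos (Nat.zero_le _)]
          have h3 : u.1 i = v.1 0 := by
            have h4 := hlow i hi1 le_rfl
            rwa [show i - 1 = 0 by omega] at h4
          have h5 : v.1 0 = a := by rw [← h3]; exact hu
          omega
        · intro j hj
          simp only [trunc_apply, if_neg (by omega : ¬ j ≤ i - 1)]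

lemma cond_backward (n m k : ℕ) (hn : 1 ≤ n) (hk : 1 ≤ k) (a : ℕ) (ha : a < n)
    (u v : RVertex n m k) (hu : u.1 k = a) (hv : v.1 k = a)
    (h : RCond1 n m (k-1) (truncVertex n m k u) (truncVertex n m k v) ∨
      RCond2 n m (k-1) (truncVertex n m k u) (truncVertex n m k v) ∨
      RCond3 n m (k-1) (truncVertex n m k u) (truncVertex n m k v)) :
    RCond1 n m k u v ∨ RCond2 n m k u v ∨ RCond3 n m k u v := by
  have key : ∀ j, j ≤ k - 1 → (truncVertex n m k u).1 j = u.1 j := fun j hj => by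
    simp [trunc_apply, hj]
  have keyv : ∀ j, j ≤ k - 1 → (truncVertex n m k v).1 j = v.1 j := fun j hj => by
    simp [trunc_apply, hj]
  have heq : ∀ j, k - 1 < j → u.1 j = v.1 j := by
    intro j hj
    rcases Nat.lt_or_ge k j with h' | h'
    · rw [u.2.2.2 j h', v.2.2.2 j h']
    · have : j = k := by omega
      rw [this, hu, hv]
  rcases h with ⟨h0, h1⟩ | ⟨he, hlt, i, hi1, hik, hne, hall⟩ | ⟨h0, i, hi1, hik, hhigh, hlow⟩
  · left
    refine ⟨by rw [← key 0 (Nat.zero_le _), ← keyv 0 (Nat.zero_le _)]; exact h0, fun j hj => ?_⟩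
    rcases le_or_gt j (k - 1) with h' | h'
    · rw [← key j h', ← keyv j h']; exact h1 j hj
    · exact heq j h'
  · right; left
    refine ⟨by rw [← key 0 (Nat.zero_le _), ← keyv 0 (Nat.zero_le _)]; exact he,
      by rw [← key 0 (Nat.zero_le _)]; exact hlt, i, hi1, by omega,
      by rw [← key i hik, ← keyv i hik]; exact hne, fun j hj => ?_⟩
    rcases le_or_gt j (k - 1) with h' | h'
    · rw [← key j h', ← keyv j h']; exact hall j hj
    · exact heq j h'
  · right; right
    refine ⟨by rw [← key 0 (Nat.zero_le _)]; exact h0, i, hi1, by omega, fun j hj => ?_, fun j hj1 hji => ?_⟩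
    · rcases le_or_gt j (k - 1) with h' | h'
      · rw [← key j h', ← keyv j h']; exact hhigh j hj
      · exact heq j h'
    · rw [← key j (by omega), ← keyv (j - 1) (by omega)]; exact hlow j hj1 hji

/-- For `n ≥ 1`, `m ≥ 0` and `k ≥ 1`: for each `a ∈ {0,…,n−1}`, the subgraph of
`L-RCube(n,m,k)` induced by the vertices whose leftmost symbol equals `a` is
isomorphic to `L-RCube(n,m,k−1)` via the map deleting the leftmost symbol; and the
vertex set of `L-RCube(n,m,k)` is partitioned into these `n` pairwise disjoint
induced copies. -/
theorem lRCube_decomposition (n m k : ℕ) (hn : 1 ≤ n) (hk : 1 ≤ k) :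
    (∀ a : ℕ, a < n →
      Set.BijOn (truncVertex n m k) { u : RVertex n m k | u.1 k = a } Set.univ ∧
      ∀ u v : RVertex n m k, u.1 k = a → v.1 k = a →
        ((LRCube n m k).Adj u v ↔
          (LRCube n m (k - 1)).Adj (truncVertex n m k u) (truncVertex n m k v))) ∧
    (∀ a b : ℕ, a ≠ b →
      Disjoint { u : RVertex n m k | u.1 k = a } { u : RVertex n m k | u.1 k = b }) ∧
    (∀ u : RVertex n m k, u.1 k < n) := by
  refine ⟨fun a ha => ⟨⟨fun u _ => trivial,
      fun u hu v hv h => trunc_inj n m k u v (hu.trans hv.symm) h,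
      fun w _ => ?_⟩, fun u v hu hv => ?_⟩,
    fun a b hab => Set.disjoint_left.mpr fun u hu hv => hab (hu.symm.trans hv),
    fun u => u.2.2.1 k hk le_rfl⟩
  · -- surjectivity: construct a preimage of `w`
    refine ⟨⟨fun i => if i ≤ k - 1 then w.1 i else if i = k then a else 0, ?_, ?_, ?_⟩, ?_, ?_⟩
    · show (if (0:ℕ) ≤ k - 1 then w.1 0 else _) < n + m
      rw [if_pos (Nat.zero_le _)]; exact w.2.1
    · intro i hi1 hik
      dsimp only
      split
      · exact w.2.2.1 i hi1 (by omega)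
      · split
        · exact ha
        · omega
    · intro i hi
      dsimp only
      rw [if_neg (by omega), if_neg (by omega)]
    · show (if k ≤ k - 1 then w.1 k else if k = k then a else 0) = a
      rw [if_neg (by omega), if_pos rfl]
    · apply Subtype.ext; funext i
      simp only [trunc_apply]
      rcases le_or_gt i (k - 1) with h' | h'
      · rw [if_pos h']
        show (if i ≤ k - 1 then w.1 i else _) = w.1 i
        rw [if_pos h']
      · rw [if_neg (by omega)]
        exact (w.2.2.2 i h').symm
  · -- adjacency correspondence
    rw [LRCube, LRCube, SimpleGraph.fromRel_adj, SimpleGraph.fromRel_adj]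
    constructor
    · rintro ⟨hne, h | h⟩
      · exact ⟨fun he => hne (trunc_inj n m k u v (hu.trans hv.symm) he),
          Or.inl (cond_forward n m k hn hk a ha u v hu hv h)⟩
      · exact ⟨fun he => hne (trunc_inj n m k u v (hu.trans hv.symm) he),
          Or.inr (cond_forward n m k hn hk a ha v u hv hu h)⟩
    · rintro ⟨hne, h | h⟩
      · exact ⟨fun he => hne (by rw [he]),
          Or.inl (cond_backward n m k hn hk a ha u v hu hv h)⟩
      · exact ⟨fun he => hne (by rw [he]),
          Or.inr (cond_backward n m k hn hk a ha v u hv hu h)⟩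
end

section
/- Let n ≥ 1 and m ≥ 0 with n + m ≥ 4, and set t = ⌊(1+m)/2⌋ if n = 1 and t = min{n, ⌊(n+m)/2⌋} otherwise. Then the logic graph L-RCube(n,m,1) contains t completely independent spanning trees. -/
open SimpleGraph

/-! ### Auxiliary: trees defined by a parent map -/

section ParentTree

open SimpleGraph

variable {W : Type*} (P : W → W) (root : W)

/-- The graph whose edges join each non-root vertex to its parent. -/
def parentGraph : SimpleGraph W :=
  SimpleGraph.fromRel (fun u v => u ≠ root ∧ v = P u)

lemma parentGraph_adj {u v : W} :
    (parentGraph P root).Adj u v ↔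
      u ≠ v ∧ ((u ≠ root ∧ v = P u) ∨ (v ≠ root ∧ u = P v)) := by
  simp [parentGraph, SimpleGraph.fromRel_adj]

variable (rank : W → ℕ)

lemma rank_P_le (hroot : P root = root)
    (hrank : ∀ v, v ≠ root → rank (P v) < rank v) (v : W) : rank (P v) ≤ rank v := by
  by_cases h : v = root
  · subst h; rw [hroot]
  · exact (hrank v h).le

lemma rank_iter_le (hroot : P root = root)
    (hrank : ∀ v, v ≠ root → rank (P v) < rank v) (k : ℕ) (v : W) :
    rank (P^[k] v) ≤ rank v := by
  induction k with
  | zero => simp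
  | succ k ih =>
    rw [Function.iterate_succ_apply']
    exact (rank_P_le P root rank hroot hrank _).trans ih

lemma not_iter_return (hroot : P root = root)
    (hrank : ∀ v, v ≠ root → rank (P v) < rank v) {u : W} (hu : u ≠ root) (k : ℕ) :
    P^[k] (P u) ≠ u := by
  intro h
  have h1 : rank (P^[k] (P u)) ≤ rank (P u) := rank_iter_le P root rank hroot hrank k _
  have h2 : rank (P u) < rank u := hrank u hu
  rw [h] at h1; omega

lemma parentGraph_reach (hroot : P root = root)
    (hrank : ∀ v, v ≠ root → rank (P v) < rank v) (v : W) :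
    (parentGraph P root).Reachable v root := by
  have H : ∀ N v, rank v ≤ N → (parentGraph P root).Reachable v root := by
    intro N
    induction N with
    | zero =>
      intro v hv
      by_cases h : v = root
      · subst h; rfl
      · exact absurd (hrank v h) (by omega)
    | succ N ih =>
      intro v hv
      by_cases h : v = root
      · subst h; rfl
      · have hne : v ≠ P v := by
          intro e
          have := hrank v h
          rw [← e] at this; omega
        have hadj : (parentGraph P root).Adj v (P v) :=
          (parentGraph_adj P root).mpr ⟨hne, Or.inl ⟨h, rfl⟩⟩
        exact hadj.reachable.trans (ih (P v) (by have := hrank v h; omega))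
  exact H (rank v) v le_rfl

lemma parentGraph_isBridge (hroot : P root = root)
    (hrank : ∀ v, v ≠ root → rank (P v) < rank v) {u : W} (hu : u ≠ root)
    (hadj : (parentGraph P root).Adj u (P u)) :
    (parentGraph P root).IsBridge s(u, P u) := by
  rw [SimpleGraph.isBridge_iff]
  rintro ⟨w⟩
  set S : Set W := {x | ∃ k, P^[k] x = u} with hS
  have hus : u ∈ S := ⟨0, rfl⟩
  have hPu : P u ∉ S := by
    rintro ⟨k, hk⟩
    exact not_iter_return P root rank hroot hrank hu k hk
  obtain ⟨d, _hd, h1, h2⟩ := w.exists_boundary_dart S hus hPu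
  have hda : ((parentGraph P root) \ SimpleGraph.fromEdgeSet {s(u, P u)}).Adj d.fst d.snd := d.adj
  rw [SimpleGraph.sdiff_adj] at hda
  obtain ⟨ha, hnot⟩ := hda
  have hne' : s(d.fst, d.snd) ≠ s(u, P u) := by
    intro h
    exact hnot ((SimpleGraph.fromEdgeSet_adj _).mpr ⟨by simp [h], ha.ne⟩)
  rw [parentGraph_adj] at ha
  rcases ha.2 with ⟨hfr, hsnd⟩ | ⟨hsr, hfst⟩
  · obtain ⟨k, hk⟩ := h1
    cases k with
    | zero =>
      simp only [Function.iterate_zero_apply] at hk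
      exact hne' (by rw [hk, hsnd, hk])
    | succ k =>
      refine h2 ⟨k, ?_⟩
      rw [Function.iterate_succ_apply] at hk
      rw [hsnd]; exact hk
  · obtain ⟨k, hk⟩ := h1
    refine h2 ⟨k + 1, ?_⟩
    rw [Function.iterate_succ_apply, ← hfst, hk]

lemma parentGraph_isTree [Nonempty W] (hroot : P root = root)
    (hrank : ∀ v, v ≠ root → rank (P v) < rank v) :
    (parentGraph P root).IsTree := by
  constructor
  · exact SimpleGraph.Connected.mk
      (fun a b => (parentGraph_reach P root rank hroot hrank a).trans
        (parentGraph_reach P root rank hroot hrank b).symm)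
  · rw [SimpleGraph.isAcyclic_iff_forall_edge_isBridge]
    intro e he
    induction e with
    | _ a b =>
      rw [SimpleGraph.mem_edgeSet] at he
      have he' := he
      rw [parentGraph_adj] at he'
      rcases he'.2 with ⟨h1, rfl⟩ | ⟨h1, rfl⟩
      · exact parentGraph_isBridge P root rank hroot hrank h1 he
      · rw [Sym2.eq_swap]
        exact parentGraph_isBridge P root rank hroot hrank h1 he.symm

end ParentTree

/-! ### Auxiliary: interior vertices of a path have two neighbours -/

lemma internal_two_nbrs {W : Type*} {G : SimpleGraph W} {x y : W} (p : G.Walk x y)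
    (hp : p.IsPath) {v : W} (hv : v ∈ p.support) (hvx : v ≠ x) (hvy : v ≠ y) :
    ∃ w₁ w₂, w₁ ≠ w₂ ∧ G.Adj v w₁ ∧ G.Adj v w₂ := by
  induction p with
  | nil =>
    simp only [SimpleGraph.Walk.support_nil, List.mem_singleton] at hv
    exact absurd hv hvx
  | @cons a b c h q ih =>
    rw [SimpleGraph.Walk.support_cons] at hv
    rcases List.mem_cons.mp hv with h1 | h1
    · exact absurd h1 hvx
    · rw [SimpleGraph.Walk.cons_isPath_iff] at hp
      by_cases hvb : v = b
      · subst hvb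
        cases q with
        | nil => exact absurd rfl hvy
        | @cons _ e _ h2 q2 =>
          refine ⟨a, e, ?_, h.symm, h2⟩
          intro hae
          apply hp.2
          rw [SimpleGraph.Walk.support_cons]
          exact List.mem_cons.mpr (Or.inr (hae ▸ q2.start_mem_support))
      · exact ih hp.1 h1 hvb hvy

/-! ### The construction for `L-RCube(n,m,1)` -/

namespace LRC

/-- Build a vertex of `RVertex n m 1` from a column `a < n` and a height `b < n+m`. -/
def mkv (n m a b : ℕ) (ha : a < n) (hb : b < n + m) : RVertex n m 1 :=
  ⟨fun i => if i = 0 then b else if i = 1 then a else 0, by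
    refine ⟨by simpa using hb, ?_, ?_⟩
    · intro i h1 h2
      have : i = 1 := by omega
      subst this; simpa using ha
    · intro i hi
      have h0 : i ≠ 0 := by omega
      have h1 : i ≠ 1 := by omega
      simp [h0, h1]⟩

/-- The height (digit `v₀`) of a vertex. -/
def hgt {n m : ℕ} (v : RVertex n m 1) : ℕ := v.1 0

/-- The column (digit `v₁`) of a vertex. -/
def col {n m : ℕ} (v : RVertex n m 1) : ℕ := v.1 1

@[simp] lemma hgt_mkv (n m a b : ℕ) (ha : a < n) (hb : b < n + m) :
    hgt (mkv n m a b ha hb) = b := rfl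

@[simp] lemma col_mkv (n m a b : ℕ) (ha : a < n) (hb : b < n + m) :
    col (mkv n m a b ha hb) = a := rfl

lemma col_lt {n m : ℕ} (v : RVertex n m 1) : col v < n := v.2.2.1 1 le_rfl le_rfl

lemma hgt_lt {n m : ℕ} (v : RVertex n m 1) : hgt v < n + m := v.2.1

lemma vext {n m : ℕ} {u v : RVertex n m 1} (h1 : col u = col v) (h0 : hgt u = hgt v) :
    u = v := by
  apply Subtype.ext
  funext i
  match i with
  | 0 => exact h0
  | 1 => exact h1
  | (k+2) => rw [u.2.2.2 (k+2) (by omega), v.2.2.2 (k+2) (by omega)]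

lemma zero_above {n m : ℕ} (v : RVertex n m 1) (j : ℕ) (hj : 2 ≤ j) : v.1 j = 0 :=
  v.2.2.2 j (by omega)

/-- The hub-selection function: which of the two hub heights `i`, `t+i` of tree `i`
a leaf at height `b` attaches to. -/
def g (t i b : ℕ) : ℕ :=
  if b < t then (if i < b then i else t + i)
  else if b < 2 * t then (if i < b - t then t + i else i)
  else i

lemma g_mem (t i b : ℕ) : g t i b = i ∨ g t i b = t + i := by
  unfold g; split_ifs <;> simp

lemma g_no_cycle {t i j b : ℕ} (hi : i < t) (hj : j < t) (hij : i ≠ j)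
    (hb : b = j ∨ b = t + j) : g t j (g t i b) ≠ b := by
  unfold g; split_ifs <;> omega

/-- The hypotheses needed for the construction. -/
structure Ok (n m t : ℕ) : Prop where
  hn : 1 ≤ n
  h2t : 2 * t ≤ n + m
  htn : 2 ≤ n → t ≤ n

variable {n m t : ℕ}

/-- The root of the `i`-th tree: the vertex in column `0` at height `i`. -/
def rt (ok : Ok n m t) {i : ℕ} (hi : i < t) : RVertex n m 1 :=
  mkv n m 0 i ok.hn (by have := ok.h2t; omega)

/-- The parent map for the `i`-th tree. -/
def par (ok : Ok n m t) {i : ℕ} (hi : i < t) (v : RVertex n m 1) : RVertex n m 1 :=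
  if hgt v = i then rt ok hi
  else if hgt v = t + i then mkv n m (col v) i (col_lt v) (by have := ok.h2t; omega)
  else mkv n m (col v) (g t i (hgt v)) (col_lt v)
    (by rcases g_mem t i (hgt v) with h | h <;> rw [h] <;> [skip; skip] <;>
        · have := ok.h2t; omega)

lemma hgt_par (ok : Ok n m t) {i : ℕ} (hi : i < t) (v : RVertex n m 1) :
    hgt (par ok hi v) = i ∨ hgt (par ok hi v) = t + i := by
  unfold par
  split_ifs with h1 h2
  · left; rfl
  · left; simp
  · simpa using g_mem t i (hgt v)

lemma par_leaf (ok : Ok n m t) {i : ℕ} (hi : i < t) {v : RVertex n m 1}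
    (h1 : hgt v ≠ i) (h2 : hgt v ≠ t + i) :
    par ok hi v = mkv n m (col v) (g t i (hgt v)) (col_lt v)
      (by rcases g_mem t i (hgt v) with h | h <;> rw [h] <;> [skip; skip] <;>
          · have := ok.h2t; omega) := by
  unfold par
  rw [if_neg h1, if_neg h2]

/-- The rank used to prove the parent map yields a tree. -/
def rnk {i t : ℕ} (_hi : i < t) {n m : ℕ} (v : RVertex n m 1) : ℕ :=
  if hgt v = i then (if col v = 0 then 0 else 1) else if hgt v = t + i then 2 else 3

lemma par_root (ok : Ok n m t) {i : ℕ} (hi : i < t) : par ok hi (rt ok hi) = rt ok hi := by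
  unfold par
  rw [if_pos (by simp [rt])]

lemma par_rank (ok : Ok n m t) {i : ℕ} (hi : i < t) (v : RVertex n m 1)
    (hv : v ≠ rt ok hi) : rnk hi (par ok hi v) < rnk hi v := by
  have hti : t + i ≠ i := by omega
  by_cases h1 : hgt v = i
  · have hc : col v ≠ 0 := by
      intro hc
      exact hv (vext (by simp [rt, hc]) (by simp [rt, h1]))
    unfold par
    rw [if_pos h1]
    simp [rnk, rt, h1, hc]
  · by_cases h2 : hgt v = t + i
    · unfold par
      rw [if_neg h1, if_pos h2]
      simp only [rnk, hgt_mkv, col_mkv, h2, if_pos rfl, if_neg h1]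
      by_cases hc : col v = 0 <;> simp [hc, hti, show t ≠ 0 by omega]
    · rw [par_leaf ok hi h1 h2]
      simp only [rnk, hgt_mkv, col_mkv, if_neg h1, if_neg h2]
      rcases g_mem t i (hgt v) with h | h <;> by_cases hc : col v = 0 <;> simp [h, hc, hti, show t ≠ 0 by omega]

/-- The `i`-th spanning tree. -/
def Ti (ok : Ok n m t) {i : ℕ} (hi : i < t) : SimpleGraph (RVertex n m 1) :=
  parentGraph (par ok hi) (rt ok hi)

/-! #### The trees are subgraphs of the logic graph -/

lemma adj_vert {u v : RVertex n m 1} (hne : hgt u ≠ hgt v) (hcol : col u = col v) :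
    (LRCube n m 1).Adj u v := by
  have huv : u ≠ v := fun h => hne (by rw [h])
  refine (SimpleGraph.fromRel_adj _ _ _).mpr ⟨huv, Or.inl (Or.inl ⟨hne, ?_⟩)⟩
  intro j hj
  match j, hj with
  | 1, _ => exact hcol
  | (k+2), _ => rw [zero_above u _ (by omega), zero_above v _ (by omega)]

lemma adj_horiz {u v : RVertex n m 1} (h0 : hgt u = hgt v) (hlt : hgt u < n)
    (hc : col u ≠ col v) : (LRCube n m 1).Adj u v := by
  have huv : u ≠ v := fun h => hc (by rw [h])
  refine (SimpleGraph.fromRel_adj _ _ _).mpr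
    ⟨huv, Or.inl (Or.inr (Or.inl ⟨h0, hlt, 1, le_rfl, le_rfl, hc, ?_⟩))⟩
  intro j hj
  match j with
  | 0 => exact h0
  | 1 => exact absurd rfl hj
  | (k+2) => rw [zero_above u _ (by omega), zero_above v _ (by omega)]

lemma adj_par (ok : Ok n m t) {i : ℕ} (hi : i < t) (u : RVertex n m 1)
    (hne : u ≠ par ok hi u) : (LRCube n m 1).Adj u (par ok hi u) := by
  by_cases h1 : hgt u = i
  · have hpar : par ok hi u = rt ok hi := by unfold par; rw [if_pos h1]
    have hc : col u ≠ 0 := by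
      intro hc
      exact hne (by rw [hpar]; exact vext (by simp [rt, hc]) (by simp [rt, h1]))
    have hn2 : 2 ≤ n := by have := col_lt u; omega
    have hitn : i < n := by have := ok.htn hn2; omega
    refine adj_horiz ?_ (by rw [h1]; exact hitn) ?_
    · rw [hpar]; simp [rt, h1]
    · rw [hpar]; simpa [rt] using hc
  · by_cases h2 : hgt u = t + i
    · have hpar : par ok hi u = mkv n m (col u) i (col_lt u) (by have := ok.h2t; omega) := by
        unfold par; rw [if_neg h1, if_pos h2]
      refine adj_vert ?_ ?_
      · rw [hpar]; simpa using h1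
      · rw [hpar]; simp
    · rw [par_leaf ok hi h1 h2]
      refine adj_vert ?_ (by simp)
      simp only [hgt_mkv]
      rcases g_mem t i (hgt u) with h | h <;> rw [h] <;> [exact h1; exact h2]

lemma Ti_le (ok : Ok n m t) {i : ℕ} (hi : i < t) : Ti ok hi ≤ LRCube n m 1 := by
  intro u v h
  rw [Ti, parentGraph_adj] at h
  obtain ⟨huv, h⟩ := h
  rcases h with ⟨_, rfl⟩ | ⟨_, rfl⟩
  · exact adj_par ok hi u huv
  · exact (adj_par ok hi v (Ne.symm huv)).symm

lemma Ti_isTree (ok : Ok n m t) {i : ℕ} (hi : i < t) : (Ti ok hi).IsTree := by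
  have : Nonempty (RVertex n m 1) := ⟨rt ok hi⟩
  exact parentGraph_isTree _ _ (rnk hi) (par_root ok hi) (par_rank ok hi)

/-! #### Edge-disjointness -/

lemma no_two_cycle (ok : Ok n m t) {i j : ℕ} (hi : i < t) (hj : j < t) (hij : i ≠ j)
    {u v : RVertex n m 1} (h1 : v = par ok hi u) (h2 : u = par ok hj v) : False := by
  have hu : hgt u = j ∨ hgt u = t + j := h2 ▸ hgt_par ok hj v
  have hu1 : hgt u ≠ i := by omega
  have hu2 : hgt u ≠ t + i := by omega
  rw [par_leaf ok hi hu1 hu2] at h1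
  have hv : hgt v = g t i (hgt u) := by rw [h1]; simp
  have hv1 : hgt v ≠ j := by
    rcases g_mem t i (hgt u) with h | h <;> omega
  have hv2 : hgt v ≠ t + j := by
    rcases g_mem t i (hgt u) with h | h <;> omega
  rw [par_leaf ok hj hv1 hv2] at h2
  have : hgt u = g t j (hgt v) := by rw [h2]; simp
  rw [hv] at this
  exact g_no_cycle hi hj hij hu this.symm

lemma Ti_edge_disjoint (ok : Ok n m t) {i j : ℕ} (hi : i < t) (hj : j < t) (hij : i ≠ j) :
    Disjoint (Ti ok hi).edgeSet (Ti ok hj).edgeSet := by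
  rw [Set.disjoint_left]
  intro e he1 he2
  induction e with
  | _ u v =>
    rw [SimpleGraph.mem_edgeSet, Ti, parentGraph_adj] at he1 he2
    obtain ⟨hne, h1⟩ := he1
    obtain ⟨-, h2⟩ := he2
    rcases h1 with ⟨-, h1⟩ | ⟨-, h1⟩ <;> rcases h2 with ⟨-, h2⟩ | ⟨-, h2⟩
    · have a1 := h1 ▸ hgt_par ok hi u
      have a2 := h2 ▸ hgt_par ok hj u
      omega
    · exact no_two_cycle ok hi hj hij h1 h2
    · exact no_two_cycle ok hj hi (Ne.symm hij) h2 h1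
    · have a1 := h1 ▸ hgt_par ok hi v
      have a2 := h2 ▸ hgt_par ok hj v
      omega

/-! #### Internally disjoint paths -/

lemma hgt_mem_of_two_nbrs (ok : Ok n m t) {i : ℕ} (hi : i < t) {v w₁ w₂ : RVertex n m 1}
    (hne : w₁ ≠ w₂) (h1 : (Ti ok hi).Adj v w₁) (h2 : (Ti ok hi).Adj v w₂) :
    hgt v = i ∨ hgt v = t + i := by
  by_contra hcon
  push_neg at hcon
  have key : ∀ w, (Ti ok hi).Adj v w → w = par ok hi v := by
    intro w hw
    rw [Ti, parentGraph_adj] at hw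
    rcases hw.2 with ⟨-, rfl⟩ | ⟨-, hv⟩
    · rfl
    · have := hv ▸ hgt_par ok hi w
      omega
  exact hne ((key w₁ h1).trans (key w₂ h2).symm)

lemma Ti_internally_disjoint (ok : Ok n m t) {i j : ℕ} (hi : i < t) (hj : j < t)
    (hij : i ≠ j) : InternallyDisjointPaths (Ti ok hi) (Ti ok hj) := by
  intro x y p q hp hq v hvp hvq
  by_cases hvx : v = x
  · exact Or.inl hvx
  by_cases hvy : v = y
  · exact Or.inr hvy
  exfalso
  obtain ⟨w₁, w₂, hw, hA1, hA2⟩ := internal_two_nbrs p hp hvp hvx hvy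
  obtain ⟨z₁, z₂, hz, hB1, hB2⟩ := internal_two_nbrs q hq hvq hvx hvy
  have a1 := hgt_mem_of_two_nbrs ok hi hw hA1 hA2
  have a2 := hgt_mem_of_two_nbrs ok hj hz hB1 hB2
  omega

end LRC

/-- For `n ≥ 1`, `m ≥ 0` with `n + m ≥ 4`, with `t = ⌊(1+m)/2⌋` if `n = 1` and
`t = min{n, ⌊(n+m)/2⌋}` otherwise, the logic graph `L-RCube(n,m,1)` contains `t`
completely independent spanning trees. -/
theorem lRCube_order_one_exists_cists (n m : ℕ) (hn : 1 ≤ n) (hnm : 4 ≤ n + m) :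
    ∃ T : Fin (if n = 1 then (1 + m) / 2 else min n ((n + m) / 2)) →
        SimpleGraph (RVertex n m 1),
      IsCISTFamily (LRCube n m 1) T := by
  have ok : LRC.Ok n m (if n = 1 then (1 + m) / 2 else min n ((n + m) / 2)) := by
    refine ⟨hn, ?_, ?_⟩
    · by_cases h : n = 1
      · subst h; rw [if_pos rfl]; omega
      · rw [if_neg h]
        have := Nat.min_le_right n ((n + m) / 2)
        omega
    · intro h2
      rw [if_neg (by omega)]
      exact Nat.min_le_left _ _
  refine ⟨fun i => LRC.Ti ok i.isLt, ?_, ?_, ?_⟩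
  · intro i
    exact ⟨LRC.Ti_le ok i.isLt, LRC.Ti_isTree ok i.isLt⟩
  · intro i j hij
    exact LRC.Ti_edge_disjoint ok i.isLt j.isLt (fun h => hij (Fin.ext h))
  · intro i j hij
    exact LRC.Ti_internally_disjoint ok i.isLt j.isLt (fun h => hij (Fin.ext h))
end

section
/- Let n ≥ 1 and m ≥ 0 with n + m ≥ 4, and set t = ⌊(1+m)/2⌋ if n = 1 and t = min{n, ⌊(n+m)/2⌋} otherwise. Then L-RCube(n,m,1) contains t completely independent spanning trees T_1, …, T_t such that each T_j has diameter equal to 3 if n = 1; equal to 5 if n ≥ 2 and (n = 2 or m = 0); and equal to 6 if n ≥ 3 and m ≥ 1. -/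
open SimpleGraph

namespace PTree

variable {V : Type*} (par : V → V)

/-- The graph determined by a parent function. -/
def ptree : SimpleGraph V where
  Adj u v := u ≠ v ∧ (par u = v ∨ par v = u)
  symm := ⟨by intro u v ⟨h1, h2⟩; exact ⟨h1.symm, h2.symm⟩⟩
  loopless := ⟨fun v h => h.1 rfl⟩

variable {par} {r : V} {ρ : V → ℕ}

lemma ptree_adj {u v : V} : (ptree par).Adj u v ↔ u ≠ v ∧ (par u = v ∨ par v = u) := Iff.rfl

section

variable (hr : par r = r) (hρ : ∀ v, v ≠ r → ρ (par v) < ρ v)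
include hr hρ

lemma ne_par {v : V} (hv : v ≠ r) : v ≠ par v := by
  intro h
  exact absurd (hρ v hv) (by rw [← h]; omega)

lemma adj_par {v : V} (hv : v ≠ r) : (ptree par).Adj v (par v) :=
  ⟨ne_par hr hρ hv, Or.inl rfl⟩

lemma reach_root (v : V) : (ptree par).Reachable v r := by
  generalize hk : ρ v = k
  induction k using Nat.strong_induction_on generalizing v with
  | _ k ih =>
    by_cases hv : v = r
    · exact hv ▸ Reachable.refl v
    · exact ((adj_par hr hρ hv).reachable).trans
        (ih (ρ (par v)) (hk ▸ hρ v hv) _ rfl)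

lemma ptree_connected [Nonempty V] : (ptree par).Connected := by
  rw [connected_iff_exists_forall_reachable]
  exact ⟨r, fun v => (reach_root hr hρ v).symm⟩

lemma par_of_adj {v w : V} (h : (ptree par).Adj v w) (hv : v ≠ r) (hw : par w ≠ v) :
    par v = w := by
  rcases h.2 with h2 | h2
  · exact h2
  · exact absurd h2 hw

lemma ptree_isAcyclic : (ptree par).IsAcyclic := by
  classical
  intro a c hc
  obtain ⟨v, hv, hmax⟩ : ∃ v ∈ c.support.toFinset, ∀ w ∈ c.support.toFinset, ρ w ≤ ρ v :=
    Finset.exists_max_image _ ρ ⟨a, by simp [c.start_mem_support]⟩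
  rw [List.mem_toFinset] at hv
  have hc' := hc.rotate hv
  have htail : ∀ x, x ∈ (c.rotate v hv).support.tail → x ∈ c.support := fun x hx =>
    List.mem_of_mem_tail ((c.support_rotate v hv).mem_iff.mp hx)
  cases hq : c.rotate v hv with
  | nil => exact Walk.IsCycle.not_of_nil (hq ▸ hc')
  | @cons _ w _ h q =>
    rw [hq] at hc' htail
    obtain ⟨hpath, hedge⟩ := (Walk.cons_isCycle_iff q h).mp hc'
    cases hqr : q.reverse with
    | nil => exact absurd rfl h.1
    | @cons _ y _ h' q'' =>
      have hy_edge : s(v, y) ∈ q.edges := by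
        have hmem : s(v, y) ∈ q.reverse.edges := by rw [hqr]; simp
        rwa [Walk.edges_reverse, List.mem_reverse] at hmem
      have hyw : y ≠ w := by
        intro e
        exact hedge (by rwa [e] at hy_edge)
      have hy_sup : y ∈ q.support := by
        have hmem : y ∈ q.reverse.support := by rw [hqr]; simp
        rwa [Walk.support_reverse, List.mem_reverse] at hmem
      have hadj_y : (ptree par).Adj v y := h'
      have hadj_w : (ptree par).Adj v w := h
      have hwsup : w ∈ c.support := htail w (by simp)
      have hysup : y ∈ c.support := htail y (by simp [hy_sup])
      have hρw : ρ w ≤ ρ v := hmax w (List.mem_toFinset.mpr hwsup)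
      have hρy : ρ y ≤ ρ v := hmax y (List.mem_toFinset.mpr hysup)
      by_cases hvr : v = r
      · subst hvr
        rcases hadj_w.2 with h2 | h2
        · exact hadj_w.1 (hr.symm.trans h2)
        · have hwr : w ≠ v := fun e => hadj_w.1 e.symm
          have hlt := hρ w hwr
          rw [h2] at hlt
          omega
      · have hpw : par v = w := by
          rcases hadj_w.2 with h2 | h2
          · exact h2
          · have hwr : w ≠ r := by
              intro e2; rw [e2, hr] at h2; exact hvr h2.symm
            have hlt := hρ w hwr
            rw [h2] at hlt
            omega
        have hpy : par v = y := by
          rcases hadj_y.2 with h2 | h2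
          · exact h2
          · have hyr : y ≠ r := by
              intro e2; rw [e2, hr] at h2; exact hvr h2.symm
            have hlt := hρ y hyr
            rw [h2] at hlt
            omega
        exact hyw (hpy ▸ hpw ▸ rfl)

lemma ptree_isTree [Nonempty V] : (ptree par).IsTree :=
  ⟨ptree_connected hr hρ, ptree_isAcyclic hr hρ⟩

/-- Walk from `v` to its `k`-th iterated parent. -/
lemma exists_walk_iterate (k : ℕ) (v : V) :
    ∃ p : (ptree par).Walk v (par^[k] v), p.length ≤ k := by
  induction k generalizing v with
  | zero => exact ⟨Walk.nil, by simp⟩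
  | succ k ih =>
    by_cases hv : v = r
    · subst hv
      have hfix : v = par^[k+1] v := (Function.iterate_fixed hr (k+1)).symm
      exact ⟨Walk.nil.copy rfl hfix, by rw [Walk.length_copy]; simp⟩
    · obtain ⟨p, hp⟩ := ih (par v)
      have hs : par^[k] (par v) = par^[k+1] v := (Function.iterate_succ_apply par k v).symm
      exact ⟨(Walk.cons (adj_par hr hρ hv) p).copy rfl hs, by
        simp [Walk.length_copy]; omega⟩

end

end PTree


namespace PTree

variable {V : Type*} {T : SimpleGraph V}

lemma exists_two_nbrs : ∀ {x y : V} (p : T.Walk x y), p.IsPath →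
    ∀ v ∈ p.support, v ≠ x → v ≠ y →
      ∃ w1 w2, w1 ≠ w2 ∧ T.Adj v w1 ∧ T.Adj v w2 := by
  intro x y p
  induction p with
  | nil =>
    intro _ v hv hvx _
    simp at hv
    exact absurd hv hvx
  | @cons x w y h q ih =>
    intro hp v hv hvx hvy
    have hq : q.IsPath := hp.of_cons
    have hxq : x ∉ q.support := ((Walk.cons_isPath_iff h q).mp hp).2
    rw [Walk.support_cons, List.mem_cons] at hv
    rcases hv with hv | hv
    · exact absurd hv hvx
    · by_cases hvw : v = w
      · subst hvw
        cases q with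
        | nil => exact absurd (by simpa using hv) hvy
        | @cons _ z _ h' q' =>
          refine ⟨x, z, ?_, h.symm, h'⟩
          intro e
          apply hxq
          rw [e, Walk.support_cons]
          exact List.mem_cons_of_mem _ q'.start_mem_support
      · exact ih hq v hv hvw hvy

lemma lip_walk (f : V → ℤ) (hf : ∀ u v, T.Adj u v → (f u - f v).natAbs ≤ 1) :
    ∀ {u v : V} (p : T.Walk u v), (f u - f v).natAbs ≤ p.length := by
  intro u v p
  induction p with
  | nil => simp
  | @cons x w y h q ih =>
    have h1 := hf _ _ h
    have h2 : (f x - f y).natAbs ≤ (f x - f w).natAbs + (f w - f y).natAbs := by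
      have : f x - f y = (f x - f w) + (f w - f y) := by ring
      rw [this]
      exact Int.natAbs_add_le _ _
    rw [Walk.length_cons]
    omega

lemma dist_le_centers (hconn : T.Connected) {X Y : V} (hXY : T.dist X Y ≤ 1) (K : ℕ)
    (h : ∀ v, T.dist v X ≤ K ∨ T.dist v Y ≤ K) (u v : V) : T.dist u v ≤ 2*K+1 := by
  have key : ∀ Z W : V, (Z = X ∨ Z = Y) → (W = X ∨ W = Y) → T.dist Z W ≤ 1 := by
    intro Z W hZ hW
    have hYX : T.dist Y X ≤ 1 := by rw [SimpleGraph.dist_comm]; exact hXY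
    have hXX : T.dist X X = 0 := SimpleGraph.dist_self
    have hYY : T.dist Y Y = 0 := SimpleGraph.dist_self
    rcases hZ with rfl | rfl <;> rcases hW with rfl | rfl <;> omega
  have pick : ∀ w, ∃ Z, (Z = X ∨ Z = Y) ∧ T.dist w Z ≤ K := by
    intro w
    rcases h w with hw | hw
    · exact ⟨X, Or.inl rfl, hw⟩
    · exact ⟨Y, Or.inr rfl, hw⟩
  obtain ⟨Zu, hZu, hu⟩ := pick u
  obtain ⟨Zv, hZv, hv⟩ := pick v
  calc T.dist u v ≤ T.dist u Zv + T.dist Zv v := hconn.dist_triangle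
    _ ≤ (T.dist u Zu + T.dist Zu Zv) + T.dist Zv v := by
        have := hconn.dist_triangle (u := u) (v := Zu) (w := Zv)
        omega
    _ ≤ 2*K+1 := by
        have h1 := key Zu Zv hZu hZv
        have h2 : T.dist Zv v = T.dist v Zv := dist_comm ..
        omega

lemma diam_eq_of (hconn : T.Connected) (D : ℕ) (hub : ∀ u v : V, T.dist u v ≤ D)
    {u0 v0 : V} (hlb : ∀ p : T.Walk u0 v0, D ≤ p.length) : T.diam = D := by
  have hed : T.ediam = (D : ℕ∞) := by
    apply le_antisymm
    · apply ediam_le_of_edist_le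
      intro u v
      obtain ⟨p, hp⟩ := hconn.exists_walk_length_eq_dist u v
      calc T.edist u v ≤ (p.length : ℕ∞) := edist_le p
        _ ≤ (D : ℕ∞) := by
            have := hub u v
            rw [hp]
            exact_mod_cast this
    · calc (D:ℕ∞) ≤ T.edist u0 v0 := le_iInf fun p => by exact_mod_cast hlb p
        _ ≤ T.ediam := edist_le_ediam
  rw [SimpleGraph.diam, hed]
  simp

end PTree


namespace RC

variable {n m : ℕ}

def col (u : RVertex n m 1) : ℕ := u.1 0
def row (u : RVertex n m 1) : ℕ := u.1 1

lemma row_lt (u : RVertex n m 1) : row u < n := u.2.2.1 1 le_rfl le_rfl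
lemma col_lt (u : RVertex n m 1) : col u < n + m := u.2.1

def mk (a b : ℕ) (ha : a < n) (hb : b < n + m) : RVertex n m 1 :=
  ⟨fun i => if i = 0 then b else if i = 1 then a else 0, by
    refine ⟨by simpa using hb, fun i h1 h2 => ?_, fun i hi => ?_⟩
    · interval_cases i <;> simpa using ha
    · have : i ≠ 0 := by omega
      have : i ≠ 1 := by omega
      simp_all⟩

@[simp] lemma col_mk (a b : ℕ) (ha : a < n) (hb : b < n + m) : col (mk a b ha hb) = b := rfl
@[simp] lemma row_mk (a b : ℕ) (ha : a < n) (hb : b < n + m) : row (mk a b ha hb) = a := rfl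

lemma vext {u v : RVertex n m 1} (h0 : col u = col v) (h1 : row u = row v) : u = v := by
  refine Subtype.ext (funext fun i => ?_)
  match i with
  | 0 => exact h0
  | 1 => exact h1
  | (i+2) =>
    rw [u.2.2.2 (i+2) (by omega), v.2.2.2 (i+2) (by omega)]

lemma vne_of_col {u v : RVertex n m 1} (h : col u ≠ col v) : u ≠ v :=
  fun e => h (e ▸ rfl)

lemma vne_of_row {u v : RVertex n m 1} (h : row u ≠ row v) : u ≠ v :=
  fun e => h (e ▸ rfl)

lemma adj_row {u v : RVertex n m 1} (h : row u = row v) (hne : u ≠ v) :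
    (LRCube n m 1).Adj u v := by
  refine ⟨hne, Or.inl (Or.inl ⟨?_, fun j hj => ?_⟩)⟩
  · intro e
    exact hne (vext e h)
  · match j, hj with
    | 1, _ => exact h
    | (i+2), _ => rw [u.2.2.2 (i+2) (by omega), v.2.2.2 (i+2) (by omega)]

lemma adj_col {u v : RVertex n m 1} (h : col u = col v) (hlt : col u < n) (hne : u ≠ v) :
    (LRCube n m 1).Adj u v := by
  refine ⟨hne, Or.inl (Or.inr (Or.inl ⟨h, hlt, 1, le_rfl, le_rfl, ?_, fun j hj => ?_⟩))⟩
  · intro e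
    exact hne (vext h e)
  · match j, hj with
    | 0, _ => exact h
    | (i+2), _ => rw [u.2.2.2 (i+2) (by omega), v.2.2.2 (i+2) (by omega)]

/-- attachment rule: leaf in column `v` attaches to the center in column `j`
(otherwise to the center in column `t+j`). -/
def toJ (t v j : ℕ) : Prop := (v < t ∧ v < j) ∨ (t ≤ v ∧ v < 2*t ∧ t+j < v) ∨ 2*t ≤ v

instance (t v j : ℕ) : Decidable (toJ t v j) := by unfold toJ; infer_instance

variable (B : Bool) (t : ℕ) (hn : 0 < n) (h2t : 2*t ≤ n+m)

def par (j : Fin t) (u : RVertex n m 1) : RVertex n m 1 :=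
  if col u = (j : ℕ) then mk 0 j hn (by omega)
  else if col u = t + (j : ℕ) then
    (if B then (if row u = 0 then mk 0 j hn (by omega) else mk 0 (t+(j:ℕ)) hn (by omega))
     else mk (row u) j (row_lt u) (by omega))
  else if toJ t (col u) j then mk (row u) j (row_lt u) (by omega)
  else mk (row u) (t+(j:ℕ)) (row_lt u) (by omega)

def rt (j : Fin t) : RVertex n m 1 := mk 0 j hn (by omega)

@[simp] lemma col_rt (j : Fin t) : col (rt t hn h2t j) = j := rfl
@[simp] lemma row_rt (j : Fin t) : row (rt t hn h2t j) = 0 := rfl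

lemma par_rt (j : Fin t) : par B t hn h2t j (rt t hn h2t j) = rt t hn h2t j := by
  unfold par
  rw [if_pos (col_rt t hn h2t j)]
  rfl

def rk (j : Fin t) (u : RVertex n m 1) : ℕ :=
  if col u = (j:ℕ) then (if row u = 0 then 0 else 1)
  else if col u = t + (j:ℕ) then (if row u = 0 then 2 else 3)
  else 4

lemma eq_rt_iff {j : Fin t} {u : RVertex n m 1} :
    u = rt t hn h2t j ↔ (col u = j ∧ row u = 0) := by
  constructor
  · intro h; rw [h]; exact ⟨rfl, rfl⟩
  · intro ⟨h1, h2⟩; exact vext h1 h2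

lemma rk_par {j : Fin t} : ∀ v, v ≠ rt t hn h2t j →
    rk t j (par B t hn h2t j v) < rk t j v := by
  intro v hv
  have hjt : (j:ℕ) < t := j.2
  have hners : col v = (j:ℕ) → row v ≠ 0 := by
    intro h1 h2
    exact hv ((eq_rt_iff t hn h2t).mpr ⟨h1, h2⟩)
  unfold par rk
  split_ifs with h1 h2 h3 h4 h5 h6 h7 h8 <;>
    simp_all [col_mk, row_mk] <;> omega

end RC

section Part4

open PTree

variable {n m : ℕ} (B : Bool) (t : ℕ) (hn : 0 < n) (h2t : 2*t ≤ n+m)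

namespace RC

lemma col_par_mem (j : Fin t) (v : RVertex n m 1) :
    col (par B t hn h2t j v) = (j:ℕ) ∨ col (par B t hn h2t j v) = t + (j:ℕ) := by
  unfold par
  split_ifs <;> simp

lemma par_leaf_iff {j : Fin t} {u v : RVertex n m 1} (h1 : col u ≠ (j:ℕ))
    (h2 : col u ≠ t + (j:ℕ)) (hp : par B t hn h2t j u = v) :
    row v = row u ∧
      ((toJ t (col u) j ∧ col v = (j:ℕ)) ∨ (¬ toJ t (col u) j ∧ col v = t + (j:ℕ))) := by
  unfold par at hp
  rw [if_neg h1, if_neg h2] at hp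
  by_cases hJ : toJ t (col u) j
  · rw [if_pos hJ] at hp
    rw [← hp]
    exact ⟨rfl, Or.inl ⟨hJ, rfl⟩⟩
  · rw [if_neg hJ] at hp
    rw [← hp]
    exact ⟨rfl, Or.inr ⟨hJ, rfl⟩⟩

lemma par_ne_par {i j : Fin t} (hij : (i:ℕ) ≠ (j:ℕ)) {u v : RVertex n m 1}
    (h1 : par B t hn h2t i u = v) (h2 : par B t hn h2t j u = v) : False := by
  have c1 := h1 ▸ col_par_mem B t hn h2t i u
  have c2 := h2 ▸ col_par_mem B t hn h2t j u
  have hi := i.2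
  have hj := j.2
  omega

lemma par_cross {i j : Fin t} (hij : (i:ℕ) ≠ (j:ℕ)) {u v : RVertex n m 1}
    (h1 : par B t hn h2t i u = v) (h2 : par B t hn h2t j v = u) : False := by
  have hi := i.2
  have hj := j.2
  have hci := h1 ▸ col_par_mem B t hn h2t i u
  have hcj := h2 ▸ col_par_mem B t hn h2t j v
  have hu1 : col u ≠ (i:ℕ) := by omega
  have hu2 : col u ≠ t + (i:ℕ) := by omega
  have hv1 : col v ≠ (j:ℕ) := by omega
  have hv2 : col v ≠ t + (j:ℕ) := by omega
  obtain ⟨_, Hi⟩ := par_leaf_iff B t hn h2t hu1 hu2 h1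
  obtain ⟨_, Hj⟩ := par_leaf_iff B t hn h2t hv1 hv2 h2
  rcases Hi with ⟨hJ1, hc1⟩ | ⟨hJ1, hc1⟩ <;> rcases Hj with ⟨hJ2, hc2⟩ | ⟨hJ2, hc2⟩ <;>
    unfold toJ at hJ1 hJ2 <;> omega

lemma tree_edge_disjoint {i j : Fin t} (hij : i ≠ j) :
    Disjoint ((ptree (par B t hn h2t i)).edgeSet) ((ptree (par B t hn h2t j)).edgeSet) := by
  have hij' : (i:ℕ) ≠ (j:ℕ) := fun h => hij (Fin.ext h)
  rw [Set.disjoint_left]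
  intro e h1 h2
  induction e with
  | _ u v =>
    rw [mem_edgeSet] at h1 h2
    obtain ⟨hne, ho1⟩ := h1
    obtain ⟨_, ho2⟩ := h2
    rcases ho1 with ho1 | ho1 <;> rcases ho2 with ho2 | ho2
    · exact par_ne_par B t hn h2t hij' ho1 ho2
    · exact par_cross B t hn h2t hij' ho1 ho2
    · exact par_cross B t hn h2t hij'.symm ho2 ho1
    · exact par_ne_par B t hn h2t hij' ho1 ho2

lemma nbr_unique {j : Fin t} {v w : RVertex n m 1}
    (h : (ptree (par B t hn h2t j)).Adj v w)
    (h1 : col v ≠ (j:ℕ)) (h2 : col v ≠ t + (j:ℕ)) : w = par B t hn h2t j v := by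
  rcases h.2 with hp | hp
  · exact hp.symm
  · exfalso
    have := hp ▸ col_par_mem B t hn h2t j w
    exact (by omega : False)

lemma col_mem_of_two_nbrs {j : Fin t} {v w1 w2 : RVertex n m 1} (hne : w1 ≠ w2)
    (ha1 : (ptree (par B t hn h2t j)).Adj v w1)
    (ha2 : (ptree (par B t hn h2t j)).Adj v w2) :
    col v = (j:ℕ) ∨ col v = t + (j:ℕ) := by
  by_contra hcon
  push_neg at hcon
  have e1 := nbr_unique B t hn h2t ha1 hcon.1 hcon.2
  have e2 := nbr_unique B t hn h2t ha2 hcon.1 hcon.2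
  exact hne (e1.trans e2.symm)

lemma internally_disjoint {i j : Fin t} (hij : i ≠ j) :
    InternallyDisjointPaths (ptree (par B t hn h2t i)) (ptree (par B t hn h2t j)) := by
  intro x y p q hp hq v hvp hvq
  by_contra hcon
  push_neg at hcon
  obtain ⟨w1, w2, hw, ha1, ha2⟩ := exists_two_nbrs p hp v hvp hcon.1 hcon.2
  obtain ⟨z1, z2, hz, hb1, hb2⟩ := exists_two_nbrs q hq v hvq hcon.1 hcon.2
  have c1 := col_mem_of_two_nbrs B t hn h2t hw ha1 ha2
  have c2 := col_mem_of_two_nbrs B t hn h2t hz hb1 hb2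
  have hij' : (i:ℕ) ≠ (j:ℕ) := fun h => hij (Fin.ext h)
  have hi := i.2
  have hj := j.2
  omega

lemma tree_le {j : Fin t} (htn : n = 1 ∨ t ≤ n) (hB : B = true → 2*t ≤ n) :
    ptree (par B t hn h2t j) ≤ LRCube n m 1 := by
  have key : ∀ u v : RVertex n m 1, u ≠ v → par B t hn h2t j u = v →
      (LRCube n m 1).Adj u v := by
    intro u v hne hp
    by_cases hc1 : col u = (j:ℕ)
    · have hv : v = rt t hn h2t j := by
        rw [← hp]
        unfold par rt
        rw [if_pos hc1]
      have hcv : col v = (j:ℕ) := by rw [hv]; rfl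
      rcases htn with h1 | htn
      · exfalso
        apply hne
        apply vext (hc1.trans hcv.symm)
        have := row_lt u
        have := row_lt v
        omega
      · exact adj_col (hc1.trans hcv.symm) (by rw [hc1]; have := j.2; omega) hne
    · by_cases hc2 : col u = t + (j:ℕ)
      · unfold par at hp
        rw [if_neg hc1, if_pos hc2] at hp
        cases B with
        | false =>
          simp only [Bool.false_eq_true, if_false] at hp
          exact adj_row (by rw [← hp]; simp) hne
        | true =>
          simp only [if_true] at hp
          by_cases h0 : row u = 0
          · rw [if_pos h0] at hp
            exact adj_row (by rw [← hp, h0]; simp) hne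
          · rw [if_neg h0] at hp
            have hclt : col u < n := by
              have := hB rfl
              have := j.2
              omega
            exact adj_col (by rw [← hp, hc2]; simp) hclt hne
      · obtain ⟨hrow, _⟩ := par_leaf_iff B t hn h2t hc1 hc2 hp
        exact adj_row hrow.symm hne
  intro u v h
  obtain ⟨hne, hor⟩ := h
  rcases hor with hp | hp
  · exact key u v hne hp
  · exact ((LRCube n m 1).adj_symm (key v u hne.symm hp))

end RC

end Part4

section Part5

open PTree

namespace RC

variable {n m : ℕ} (B : Bool) (t : ℕ) (hn : 0 < n) (h2t : 2*t ≤ n+m)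

lemma par_col_j {j : Fin t} {v : RVertex n m 1} (h : col v = (j:ℕ)) :
    par B t hn h2t j v = rt t hn h2t j := by
  unfold par rt
  rw [if_pos h]

lemma par_tj_false {j : Fin t} {v : RVertex n m 1} (h : col v = t+(j:ℕ)) :
    par false t hn h2t j v = mk (row v) (j:ℕ) (row_lt v) (by have := j.2; omega) := by
  have hne : col v ≠ (j:ℕ) := by have := j.2; omega
  unfold par
  rw [if_neg hne, if_pos h]
  simp

lemma par_tj_true0 {j : Fin t} {v : RVertex n m 1} (h : col v = t+(j:ℕ)) (h0 : row v = 0) :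
    par true t hn h2t j v = rt t hn h2t j := by
  have hne : col v ≠ (j:ℕ) := by have := j.2; omega
  unfold par rt
  rw [if_neg hne, if_pos h]
  simp [h0]

lemma par_tj_true1 {j : Fin t} {v : RVertex n m 1} (h : col v = t+(j:ℕ)) (h0 : row v ≠ 0) :
    par true t hn h2t j v = mk 0 (t+(j:ℕ)) hn (by have := j.2; omega) := by
  have hne : col v ≠ (j:ℕ) := by have := j.2; omega
  unfold par
  rw [if_neg hne, if_pos h]
  simp [h0]

lemma par_leaf_J {j : Fin t} {v : RVertex n m 1} (h1 : col v ≠ (j:ℕ))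
    (h2 : col v ≠ t+(j:ℕ)) (hJ : toJ t (col v) j) :
    par B t hn h2t j v = mk (row v) (j:ℕ) (row_lt v) (by have := j.2; omega) := by
  unfold par
  rw [if_neg h1, if_neg h2, if_pos hJ]

lemma par_leaf_N {j : Fin t} {v : RVertex n m 1} (h1 : col v ≠ (j:ℕ))
    (h2 : col v ≠ t+(j:ℕ)) (hJ : ¬ toJ t (col v) j) :
    par B t hn h2t j v = mk (row v) (t+(j:ℕ)) (row_lt v) (by have := j.2; omega) := by
  unfold par
  rw [if_neg h1, if_neg h2, if_neg hJ]

/-- witness column whose leaves attach to the center in column `j` -/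
def wT (j : Fin t) : ℕ := if (j:ℕ) = 0 then t+1 else 0

/-- witness column whose leaves attach to the center in column `t+j` -/
def wF (j : Fin t) : ℕ := if (j:ℕ) = 0 then 1 else t

include h2t in
lemma wT_facts (ht2 : 2 ≤ t) (j : Fin t) :
    wT t j ≠ (j:ℕ) ∧ wT t j ≠ t+(j:ℕ) ∧ wT t j < n+m ∧ toJ t (wT t j) j := by
  have hj := j.2
  unfold wT toJ
  split_ifs <;> omega

include h2t in
lemma wF_facts (ht2 : 2 ≤ t) (j : Fin t) :
    wF t j ≠ (j:ℕ) ∧ wF t j ≠ t+(j:ℕ) ∧ wF t j < n+m ∧ ¬ toJ t (wF t j) j := by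
  have hj := j.2
  unfold wF toJ
  split_ifs <;> omega

lemma lip_adj {j : Fin t} (f : RVertex n m 1 → ℤ)
    (hpar : ∀ v, v ≠ rt t hn h2t j → (f v - f (par B t hn h2t j v)).natAbs ≤ 1) :
    ∀ u v, (ptree (par B t hn h2t j)).Adj u v → (f u - f v).natAbs ≤ 1 := by
  intro u v h
  obtain ⟨hne, hor⟩ := h
  rcases hor with hp | hp
  · have hur : u ≠ rt t hn h2t j := by
      intro e
      rw [e, par_rt] at hp
      exact hne (e.trans hp)
    have := hpar u hur
    rwa [hp] at this
  · have hvr : v ≠ rt t hn h2t j := by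
      intro e
      rw [e, par_rt] at hp
      exact hne (hp.symm.trans e.symm)
    have := hpar v hvr
    rw [hp] at this
    omega

lemma dist_le_one_of_adj {T : SimpleGraph (RVertex n m 1)} {X Y : RVertex n m 1}
    (h : T.Adj X Y) : T.dist X Y ≤ 1 := by
  have := SimpleGraph.dist_le (Walk.cons h Walk.nil)
  simpa using this

lemma dist_le_iterate {j : Fin t} (K : ℕ) (v : RVertex n m 1) :
    (ptree (par B t hn h2t j)).dist v ((par B t hn h2t j)^[K] v) ≤ K := by
  obtain ⟨p, hp⟩ := exists_walk_iterate (par_rt B t hn h2t j) (rk_par B t hn h2t) K v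
  exact le_trans (SimpleGraph.dist_le p) hp

end RC

end Part5

section Part6

open PTree

namespace RC

variable {n m : ℕ} (t : ℕ) (hn : 0 < n) (h2t : 2*t ≤ n+m)

def fA1 (j : Fin t) (u : RVertex n m 1) : ℤ :=
  if col u = (j:ℕ) then 0 else if col u = t+(j:ℕ) then 1
  else if toJ t (col u) j then -1 else 2

include h2t in
lemma diam_A1 (hn1 : n = 1) (ht2 : 2 ≤ t) (j : Fin t) :
    (ptree (par false t hn h2t j)).diam = 3 := by
  have hj := j.2
  have hr := par_rt false t hn h2t j
  have hρ := rk_par false t hn h2t (j := j)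
  have hne : Nonempty (RVertex n m 1) := ⟨rt t hn h2t j⟩
  have hconn := ptree_connected hr hρ
  set X := rt t hn h2t j with hX
  set Y : RVertex n m 1 := mk 0 (t+(j:ℕ)) hn (by omega) with hY
  have hYX : par false t hn h2t j Y = X := by
    rw [par_tj_false t hn h2t (by simp [hY])]
    exact vext (by simp [hX, hY]) (by simp [hX, hY])
  have hXY : (ptree (par false t hn h2t j)).Adj X Y := by
    refine ⟨?_, Or.inr hYX⟩
    apply vne_of_col
    simp [hX, hY]
    omega
  -- every vertex has its parent among the two centers
  have pick : ∀ v, par false t hn h2t j v = X ∨ par false t hn h2t j v = Y := by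
    intro v
    have hrow0 : row v = 0 := by have := row_lt v; omega
    by_cases hc1 : col v = (j:ℕ)
    · exact Or.inl (par_col_j false t hn h2t hc1)
    · by_cases hc2 : col v = t+(j:ℕ)
      · rw [par_tj_false t hn h2t hc2]
        exact Or.inl (vext (by simp [hX]) (by simp [hX, hrow0]))
      · by_cases hJ : toJ t (col v) j
        · rw [par_leaf_J false t hn h2t hc1 hc2 hJ]
          exact Or.inl (vext (by simp [hX]) (by simp [hX, hrow0]))
        · rw [par_leaf_N false t hn h2t hc1 hc2 hJ]
          exact Or.inr (vext (by simp [hY]) (by simp [hY, hrow0]))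
  have hub : ∀ u v : RVertex n m 1, (ptree (par false t hn h2t j)).dist u v ≤ 3 := by
    intro u v
    have hd : ∀ w, (ptree (par false t hn h2t j)).dist w X ≤ 1 ∨
        (ptree (par false t hn h2t j)).dist w Y ≤ 1 := by
      intro w
      have hit := dist_le_iterate false t hn h2t (j := j) 1 w
      rw [Function.iterate_one] at hit
      rcases pick w with hpw | hpw
      · exact Or.inl (by rwa [hpw] at hit)
      · exact Or.inr (by rwa [hpw] at hit)
    have := dist_le_centers hconn (dist_le_one_of_adj hXY) 1 hd u v
    omega
  -- lower bound pair
  obtain ⟨hT1, hT2, hT3, hT4⟩ := wT_facts t h2t ht2 j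
  obtain ⟨hF1, hF2, hF3, hF4⟩ := wF_facts t h2t ht2 j
  set u0 : RVertex n m 1 := mk 0 (wT t j) hn hT3 with hu0
  set v0 : RVertex n m 1 := mk 0 (wF t j) hn hF3 with hv0
  have hpar : ∀ v, v ≠ rt t hn h2t j →
      ((fA1 t j v) - fA1 t j (par false t hn h2t j v)).natAbs ≤ 1 := by
    intro v hv
    by_cases hc1 : col v = (j:ℕ)
    · rw [par_col_j false t hn h2t hc1]
      unfold fA1
      simp [hc1, col_rt]
    · by_cases hc2 : col v = t+(j:ℕ)
      · rw [par_tj_false t hn h2t hc2]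
        unfold fA1
        simp only [col_mk, hc1, hc2, if_false, if_true, if_pos rfl]
        split_ifs <;> omega
      · by_cases hJ : toJ t (col v) j
        · rw [par_leaf_J false t hn h2t hc1 hc2 hJ]
          unfold fA1
          simp only [col_mk]
          split_ifs <;> omega
        · rw [par_leaf_N false t hn h2t hc1 hc2 hJ]
          unfold fA1
          simp only [col_mk]
          split_ifs <;> omega
  have hlb : ∀ p : (ptree (par false t hn h2t j)).Walk u0 v0, 3 ≤ p.length := by
    intro p
    have hlip := lip_walk (fA1 t j) (lip_adj false t hn h2t (fA1 t j) hpar) p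
    have h1 : fA1 t j u0 = -1 := by
      unfold fA1
      simp only [hu0, col_mk]
      rw [if_neg hT1, if_neg hT2, if_pos hT4]
    have h2 : fA1 t j v0 = 2 := by
      unfold fA1
      simp only [hv0, col_mk]
      rw [if_neg hF1, if_neg hF2, if_neg hF4]
    rw [h1, h2] at hlip
    omega
  exact diam_eq_of hconn 3 hub hlb

end RC

end Part6

section Part7

open PTree

namespace RC

variable {n m : ℕ} (t : ℕ) (hn : 0 < n) (h2t : 2*t ≤ n+m)

def fA3 (j : Fin t) (u : RVertex n m 1) : ℤ :=
  if row u = 1 then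
    (if col u = (j:ℕ) then 1 else if col u = t+(j:ℕ) then 2
     else if toJ t (col u) j then 2 else 3)
  else if row u = 2 then
    -(if col u = (j:ℕ) then 1 else if col u = t+(j:ℕ) then 2
      else if toJ t (col u) j then 2 else 3)
  else 0

include h2t in
lemma diam_A3 (hn3 : 3 ≤ n) (ht2 : 2 ≤ t) (j : Fin t) :
    (ptree (par false t hn h2t j)).diam = 6 := by
  have hj := j.2
  have hr := par_rt false t hn h2t j
  have hρ := rk_par false t hn h2t (j := j)
  have hne : Nonempty (RVertex n m 1) := ⟨rt t hn h2t j⟩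
  have hconn := ptree_connected hr hρ
  have hit3 : ∀ v, (par false t hn h2t j)^[3] v
      = par false t hn h2t j (par false t hn h2t j (par false t hn h2t j v)) := by
    intro v
    rw [Function.iterate_succ_apply, Function.iterate_succ_apply, Function.iterate_one]
  have h3 : ∀ v, (par false t hn h2t j)^[3] v = rt t hn h2t j := by
    intro v
    rw [hit3]
    rcases col_par_mem false t hn h2t j v with h | h
    · rw [par_col_j false t hn h2t h, hr]
    · rw [par_tj_false t hn h2t h]
      rw [par_col_j false t hn h2t (by simp)]
  have hub : ∀ u v : RVertex n m 1, (ptree (par false t hn h2t j)).dist u v ≤ 6 := by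
    intro u v
    have hu := dist_le_iterate false t hn h2t (j := j) 3 u
    have hv := dist_le_iterate false t hn h2t (j := j) 3 v
    rw [h3 u] at hu
    rw [h3 v] at hv
    have htri := hconn.dist_triangle (u := u) (v := rt t hn h2t j) (w := v)
    have hcomm : (ptree (par false t hn h2t j)).dist (rt t hn h2t j) v
        = (ptree (par false t hn h2t j)).dist v (rt t hn h2t j) := SimpleGraph.dist_comm ..
    omega
  obtain ⟨hF1, hF2, hF3, hF4⟩ := wF_facts t h2t ht2 j
  have hpar : ∀ v, v ≠ rt t hn h2t j →
      ((fA3 t j v) - fA3 t j (par false t hn h2t j v)).natAbs ≤ 1 := by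
    intro v hv
    by_cases hc1 : col v = (j:ℕ)
    · rw [par_col_j false t hn h2t hc1]
      unfold fA3
      simp only [col_rt, row_rt, hc1]
      split_ifs <;> first | exact (‹False›).elim | omega
    · by_cases hc2 : col v = t+(j:ℕ)
      · rw [par_tj_false t hn h2t hc2]
        unfold fA3
        simp only [col_mk, row_mk, hc1, hc2]
        split_ifs <;> first | exact (‹False›).elim | omega
      · by_cases hJ : toJ t (col v) j
        · rw [par_leaf_J false t hn h2t hc1 hc2 hJ]
          unfold fA3
          simp only [col_mk, row_mk]
          split_ifs <;> first | exact (‹False›).elim | omega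
        · rw [par_leaf_N false t hn h2t hc1 hc2 hJ]
          unfold fA3
          simp only [col_mk, row_mk]
          split_ifs <;> first | exact (‹False›).elim | omega
  refine diam_eq_of hconn 6 hub
    (u0 := mk 1 (wF t j) (by omega) hF3) (v0 := mk 2 (wF t j) (by omega) hF3) ?_
  intro p
  have hlip := lip_walk (fA3 t j) (lip_adj false t hn h2t (fA3 t j) hpar) p
  have h1 : fA3 t j (mk 1 (wF t j) (by omega) hF3) = 3 := by
    simp [fA3, hF1, hF2, hF4]
  have h2 : fA3 t j (mk 2 (wF t j) (by omega) hF3) = -3 := by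
    simp [fA3, hF1, hF2, hF4]
  rw [h1, h2] at hlip
  omega

def fA2 (j : Fin t) (u : RVertex n m 1) : ℤ :=
  if row u = 1 then
    (if col u = (j:ℕ) then 1 else if col u = t+(j:ℕ) then 2
     else if toJ t (col u) j then 2 else 3)
  else
    (if col u = (j:ℕ) then 0 else if col u = t+(j:ℕ) then -1
     else if toJ t (col u) j then -1 else -2)

include h2t in
lemma diam_A2 (hn2 : n = 2) (ht2 : 2 ≤ t) (j : Fin t) :
    (ptree (par false t hn h2t j)).diam = 5 := by
  have hj := j.2
  have hr := par_rt false t hn h2t j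
  have hρ := rk_par false t hn h2t (j := j)
  have hne : Nonempty (RVertex n m 1) := ⟨rt t hn h2t j⟩
  have hconn := ptree_connected hr hρ
  have hXY : (ptree (par false t hn h2t j)).Adj (rt t hn h2t j)
      (mk 1 (j:ℕ) (by omega) (by omega)) := by
    refine ⟨?_, Or.inr ?_⟩
    · apply vne_of_row
      simp
    · exact par_col_j false t hn h2t (by simp)
  have hit2 : ∀ v, (par false t hn h2t j)^[2] v
      = par false t hn h2t j (par false t hn h2t j v) := by
    intro v
    rw [Function.iterate_succ_apply, Function.iterate_one]
  have pick : ∀ v, (par false t hn h2t j)^[2] v = rt t hn h2t j ∨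
      (par false t hn h2t j)^[2] v = mk 1 (j:ℕ) (by omega) (by omega) := by
    intro v
    rw [hit2]
    rcases col_par_mem false t hn h2t j v with h | h
    · exact Or.inl (by rw [par_col_j false t hn h2t h])
    · rw [par_tj_false t hn h2t h]
      by_cases h0 : row (par false t hn h2t j v) = 0
      · exact Or.inl (vext (by simp) (by simp [h0]))
      · have h1 : row (par false t hn h2t j v) = 1 := by
          have := row_lt (par false t hn h2t j v); omega
        exact Or.inr (vext (by simp) (by simp [h1]))
  have hub : ∀ u v : RVertex n m 1, (ptree (par false t hn h2t j)).dist u v ≤ 5 := by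
    intro u v
    have hd : ∀ w, (ptree (par false t hn h2t j)).dist w (rt t hn h2t j) ≤ 2 ∨
        (ptree (par false t hn h2t j)).dist w (mk 1 (j:ℕ) (by omega) (by omega)) ≤ 2 := by
      intro w
      have hit := dist_le_iterate false t hn h2t (j := j) 2 w
      rcases pick w with hpw | hpw
      · exact Or.inl (by rwa [hpw] at hit)
      · exact Or.inr (by rwa [hpw] at hit)
    have := dist_le_centers hconn (dist_le_one_of_adj hXY) 2 hd u v
    omega
  obtain ⟨hF1, hF2, hF3, hF4⟩ := wF_facts t h2t ht2 j
  have hpar : ∀ v, v ≠ rt t hn h2t j →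
      ((fA2 t j v) - fA2 t j (par false t hn h2t j v)).natAbs ≤ 1 := by
    intro v hv
    by_cases hc1 : col v = (j:ℕ)
    · rw [par_col_j false t hn h2t hc1]
      unfold fA2
      simp only [col_rt, row_rt, hc1]
      split_ifs <;> first | exact (‹False›).elim | omega
    · by_cases hc2 : col v = t+(j:ℕ)
      · rw [par_tj_false t hn h2t hc2]
        unfold fA2
        simp only [col_mk, row_mk, hc1, hc2]
        split_ifs <;> first | exact (‹False›).elim | omega
      · by_cases hJ : toJ t (col v) j
        · rw [par_leaf_J false t hn h2t hc1 hc2 hJ]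
          unfold fA2
          simp only [col_mk, row_mk]
          split_ifs <;> first | exact (‹False›).elim | omega
        · rw [par_leaf_N false t hn h2t hc1 hc2 hJ]
          unfold fA2
          simp only [col_mk, row_mk]
          split_ifs <;> first | exact (‹False›).elim | omega
  refine diam_eq_of hconn 5 hub
    (u0 := mk 1 (wF t j) (by omega) hF3) (v0 := mk 0 (wF t j) hn hF3) ?_
  intro p
  have hlip := lip_walk (fA2 t j) (lip_adj false t hn h2t (fA2 t j) hpar) p
  have h1 : fA2 t j (mk 1 (wF t j) (by omega) hF3) = 3 := by
    simp [fA2, hF1, hF2, hF4]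
  have h2 : fA2 t j (mk 0 (wF t j) hn hF3) = -2 := by
    simp [fA2, hF1, hF2, hF4]
  rw [h1, h2] at hlip
  omega

def fB (j : Fin t) (u : RVertex n m 1) : ℤ :=
  if col u = (j:ℕ) then (if row u = 1 then -1 else 0)
  else if col u = t+(j:ℕ) then (if row u = 0 then 1 else 2)
  else if toJ t (col u) j then (if row u = 1 then -2 else 1)
  else (if row u = 0 then 2 else 3)

include h2t in
lemma diam_B (hB : 2*t ≤ n) (ht2 : 2 ≤ t) (j : Fin t) :
    (ptree (par true t hn h2t j)).diam = 5 := by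
  have hj := j.2
  have hr := par_rt true t hn h2t j
  have hρ := rk_par true t hn h2t (j := j)
  have hne : Nonempty (RVertex n m 1) := ⟨rt t hn h2t j⟩
  have hconn := ptree_connected hr hρ
  have hXY : (ptree (par true t hn h2t j)).Adj (rt t hn h2t j)
      (mk 0 (t+(j:ℕ)) hn (by omega)) := by
    refine ⟨?_, Or.inr ?_⟩
    · apply vne_of_col
      simp
      omega
    · exact par_tj_true0 t hn h2t (by simp) (by simp)
  have hit2 : ∀ v, (par true t hn h2t j)^[2] v
      = par true t hn h2t j (par true t hn h2t j v) := by
    intro v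
    rw [Function.iterate_succ_apply, Function.iterate_one]
  have pick : ∀ v, (par true t hn h2t j)^[2] v = rt t hn h2t j ∨
      (par true t hn h2t j)^[2] v = mk 0 (t+(j:ℕ)) hn (by omega) := by
    intro v
    rw [hit2]
    rcases col_par_mem true t hn h2t j v with h | h
    · exact Or.inl (by rw [par_col_j true t hn h2t h])
    · by_cases h0 : row (par true t hn h2t j v) = 0
      · exact Or.inl (by rw [par_tj_true0 t hn h2t h h0])
      · refine Or.inr ?_
        rw [par_tj_true1 t hn h2t h h0]
  have hub : ∀ u v : RVertex n m 1, (ptree (par true t hn h2t j)).dist u v ≤ 5 := by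
    intro u v
    have hd : ∀ w, (ptree (par true t hn h2t j)).dist w (rt t hn h2t j) ≤ 2 ∨
        (ptree (par true t hn h2t j)).dist w (mk 0 (t+(j:ℕ)) hn (by omega)) ≤ 2 := by
      intro w
      have hit := dist_le_iterate true t hn h2t (j := j) 2 w
      rcases pick w with hpw | hpw
      · exact Or.inl (by rwa [hpw] at hit)
      · exact Or.inr (by rwa [hpw] at hit)
    have := dist_le_centers hconn (dist_le_one_of_adj hXY) 2 hd u v
    omega
  obtain ⟨hF1, hF2, hF3, hF4⟩ := wF_facts t h2t ht2 j
  obtain ⟨hT1, hT2, hT3, hT4⟩ := wT_facts t h2t ht2 j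
  have hpar : ∀ v, v ≠ rt t hn h2t j →
      ((fB t j v) - fB t j (par true t hn h2t j v)).natAbs ≤ 1 := by
    intro v hv
    by_cases hc1 : col v = (j:ℕ)
    · rw [par_col_j true t hn h2t hc1]
      unfold fB
      simp only [col_rt, row_rt, hc1]
      split_ifs <;> first | exact (‹False›).elim | omega
    · by_cases hc2 : col v = t+(j:ℕ)
      · by_cases h0 : row v = 0
        · rw [par_tj_true0 t hn h2t hc2 h0]
          unfold fB
          simp only [col_rt, row_rt, hc1, hc2, h0]
          split_ifs <;> first | exact (‹False›).elim | omega
        · rw [par_tj_true1 t hn h2t hc2 h0]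
          unfold fB
          simp only [col_mk, row_mk, hc1, hc2]
          split_ifs <;> first | exact (‹False›).elim | omega
      · by_cases hJ : toJ t (col v) j
        · rw [par_leaf_J true t hn h2t hc1 hc2 hJ]
          unfold fB
          simp only [col_mk, row_mk]
          split_ifs <;> first | exact (‹False›).elim | omega
        · rw [par_leaf_N true t hn h2t hc1 hc2 hJ]
          unfold fB
          simp only [col_mk, row_mk]
          split_ifs <;> first | exact (‹False›).elim | omega
  refine diam_eq_of hconn 5 hub
    (u0 := mk 1 (wF t j) (by omega) hF3) (v0 := mk 1 (wT t j) (by omega) hT3) ?_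
  intro p
  have hlip := lip_walk (fB t j) (lip_adj true t hn h2t (fB t j) hpar) p
  have h1 : fB t j (mk 1 (wF t j) (by omega) hF3) = 3 := by
    simp [fB, hF1, hF2, hF4]
  have h2 : fB t j (mk 1 (wT t j) (by omega) hT3) = -2 := by
    simp [fB, hT1, hT2, hT4]
  rw [h1, h2] at hlip
  omega

end RC

end Part7


open PTree RC

/-- For `n ≥ 1`, `m ≥ 0` with `n + m ≥ 4`, with `t = ⌊(1+m)/2⌋` if `n = 1` and
`t = min{n, ⌊(n+m)/2⌋}` otherwise, `L-RCube(n,m,1)` contains `t` completely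
independent spanning trees each of whose diameters equals `3` if `n = 1`; `5` if
`n ≥ 2` and (`n = 2` or `m = 0`); and `6` if `n ≥ 3` and `m ≥ 1`. -/
theorem lRCube_order_one_cists_diam (n m : ℕ) (hn : 1 ≤ n) (hnm : 4 ≤ n + m) :
    ∃ T : Fin (if n = 1 then (1 + m) / 2 else min n ((n + m) / 2)) →
        SimpleGraph (RVertex n m 1),
      IsCISTFamily (LRCube n m 1) T ∧
        ∀ j, (n = 1 → (T j).diam = 3) ∧
          (2 ≤ n → (n = 2 ∨ m = 0) → (T j).diam = 5) ∧
          (3 ≤ n → 1 ≤ m → (T j).diam = 6) := by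

  have hn0 : 0 < n := hn
  set tt := (if n = 1 then (1 + m) / 2 else min n ((n + m) / 2)) with ht
  have hfacts : 2*tt ≤ n+m ∧ 2 ≤ tt ∧ (n = 1 ∨ tt ≤ n) := by
    rw [ht]
    by_cases h1 : n = 1
    · rw [if_pos h1]
      subst h1
      refine ⟨by omega, by omega, Or.inl rfl⟩
    · rw [if_neg h1]
      have hl := min_le_left n ((n+m)/2)
      have hr := min_le_right n ((n+m)/2)
      refine ⟨by omega, ?_, Or.inr hl⟩
      apply le_min <;> omega
  obtain ⟨h2t, ht2, htn⟩ := hfacts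
  haveI : Nonempty (RVertex n m 1) := ⟨mk 0 0 hn0 (by omega)⟩
  by_cases hcase : n ≠ 1 ∧ m = 0
  · -- construction B
    have hBn : 2*tt ≤ n := by
      have h1 : ¬ (n = 1) := hcase.1
      have hm0 : m = 0 := hcase.2
      omega
    refine ⟨fun j => ptree (par true tt hn0 h2t j), ⟨?_, ?_, ?_⟩, ?_⟩
    · intro i
      exact ⟨tree_le true tt hn0 h2t htn (fun _ => hBn),
        ptree_isTree (par_rt true tt hn0 h2t i) (rk_par true tt hn0 h2t)⟩
    · intro i j hij
      exact tree_edge_disjoint true tt hn0 h2t hij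
    · intro i j hij
      exact internally_disjoint true tt hn0 h2t hij
    · intro j
      refine ⟨fun h1 => absurd h1 hcase.1, fun _ _ => ?_, fun _ hm => ?_⟩
      · exact diam_B tt hn0 h2t hBn ht2 j
      · omega
  · -- construction A
    have hA : n = 1 ∨ 1 ≤ m := by
      by_cases h1 : n = 1
      · exact Or.inl h1
      · exact Or.inr (by omega)
    refine ⟨fun j => ptree (par false tt hn0 h2t j), ⟨?_, ?_, ?_⟩, ?_⟩
    · intro i
      exact ⟨tree_le false tt hn0 h2t htn (fun h => by simp at h),
        ptree_isTree (par_rt false tt hn0 h2t i) (rk_par false tt hn0 h2t)⟩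
    · intro i j hij
      exact tree_edge_disjoint false tt hn0 h2t hij
    · intro i j hij
      exact internally_disjoint false tt hn0 h2t hij
    · intro j
      refine ⟨fun h1 => diam_A1 tt hn0 h2t h1 ht2 j, fun h2 hor => ?_, fun h3 hm => ?_⟩
      · have hn2 : n = 2 := by
          rcases hor with h | h
          · exact h
          · exact absurd ⟨by omega, h⟩ hcase
        exact diam_A2 tt hn0 h2t hn2 ht2 j
      · exact diam_A3 tt hn0 h2t h3 ht2 j
end
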